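/- arXiv:2204.00930 — 7 statements merged into one kernel-verified Lean document; each statement's English description precedes it below -/
import Mathlib

section
/- Fix d ∈ ℕ and let p ∈ D_d be any density on [0,1)^d. For every ε > 0 there exist B, K ∈ ℕ such that for all b ≥ B and k ≥ K, inf_{q ∈ H_{d,b}^k} ‖p − q‖₁ ≤ ε. Equivalently, if b(n) → ∞ and k(n) → ∞ then inf_{q ∈ H_{d,b(n)}^{k(n)}} ‖p − q‖₁ → 0. -/
open MeasureTheory Filter

noncomputable section

open Set

/-- The 1-d histogram basis function allocating all mass to bin `i` of `b` equal bins: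
`h1 b i x = b · 1[(i-1)/b ≤ x < i/b]` (with `i` zero-indexed). -/
def h1 (b : ℕ) (i : Fin b) : ℝ → ℝ :=
  fun x => if (i : ℝ) / b ≤ x ∧ x < ((i : ℝ) + 1) / b then (b : ℝ) else 0

/-- One-dimensional histograms with `b` equal-width bins: the convex hull of the `h1 b i`. -/
def H1 (b : ℕ) : Set (ℝ → ℝ) := convexHull ℝ (Set.range (h1 b))

/-- bin `i` out of `b` equal bins of `[0,1)` (as a set; `i : ℕ` unbounded). -/
def bin (b i : ℕ) : Set ℝ := Set.Ico ((i:ℝ)/b) (((i:ℝ)+1)/b)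

def I01 : Set ℝ := Set.Ico (0:ℝ) 1

lemma h1_eq (b : ℕ) (i : Fin b) : h1 b i = (bin b i).indicator (fun _ => (b:ℝ)) := by
  funext x; simp [h1, bin, Set.indicator_apply, Set.mem_Ico]

lemma bin_subset {b i : ℕ} (hi : i < b) : bin b i ⊆ I01 := by
  have hb : (0:ℝ) < b := by exact_mod_cast Nat.pos_of_ne_zero (by omega)
  apply Set.Ico_subset_Ico
  · positivity
  · rw [div_le_one hb]; exact_mod_cast hi

lemma measurable_h1 (b : ℕ) (i : Fin b) : Measurable (h1 b i) := by
  rw [h1_eq]; exact measurable_const.indicator measurableSet_Ico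

lemma h1_nonneg (b : ℕ) (i : Fin b) (x : ℝ) : 0 ≤ h1 b i x := by
  simp only [h1]; split_ifs <;> positivity

lemma h1_zero_outside {b : ℕ} {i : Fin b} {x : ℝ} (hx : x ∉ I01) : h1 b i x = 0 := by
  rw [h1_eq, Set.indicator_apply_eq_zero]
  intro hxb; exact absurd (bin_subset i.2 hxb) (fun h => hx h)

lemma volume_bin {b : ℕ} (hb : 0 < b) (i : ℕ) :
    volume (bin b i) = ENNReal.ofReal (1/b) := by
  have hb' : (0:ℝ) < b := by exact_mod_cast hb
  rw [bin, Real.volume_Ico]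
  congr 1
  field_simp
  ring

lemma integrable_indicator_bin (b i : ℕ) (c : ℝ) :
    Integrable ((bin b i).indicator (fun _ => c)) := by
  simp only [bin]
  rw [integrable_indicator_iff measurableSet_Ico]
  exact integrableOn_const (by rw [Real.volume_Ico]; exact ENNReal.ofReal_ne_top)

lemma integral_indicator_bin {b : ℕ} (hb : 0 < b) (i : ℕ) (c : ℝ) :
    ∫ x, (bin b i).indicator (fun _ => c) x = c / b := by
  have hb' : (0:ℝ) < b := by exact_mod_cast hb
  have : volume (bin b i) = ENNReal.ofReal (1/b) := volume_bin hb i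
  simp only [bin] at this ⊢
  rw [integral_indicator measurableSet_Ico, setIntegral_const, measureReal_def, this,
    ENNReal.toReal_ofReal (by positivity)]
  simp [smul_eq_mul]; ring

lemma integrable_h1 (b : ℕ) (i : Fin b) : Integrable (h1 b i) := by
  rw [h1_eq]; exact integrable_indicator_bin b i b

lemma integral_h1 (b : ℕ) (i : Fin b) : ∫ x, h1 b i x = 1 := by
  have hb : 0 < b := i.pos
  have hb' : (0:ℝ) < b := by exact_mod_cast hb
  rw [h1_eq, integral_indicator_bin hb]
  field_simp

lemma h1_le (b : ℕ) (i : Fin b) (x : ℝ) : h1 b i x ≤ b := by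
  simp only [h1]; split_ifs <;> simp

lemma mem_H1_iff {b : ℕ} {q : ℝ → ℝ} : q ∈ H1 b ↔
    ∃ w : Fin b → ℝ, (∀ i, 0 ≤ w i) ∧ (∑ i, w i) = 1 ∧
      q = fun x => ∑ i, w i * h1 b i x := by
  constructor
  · intro hq
    rw [H1, convexHull_range_eq_exists_affineCombination] at hq
    obtain ⟨s, w, h0, hs, hq⟩ := hq
    refine ⟨fun i => if i ∈ s then w i else 0, fun i => by dsimp only; split_ifs with h; exacts [h0 i h, le_refl 0], ?_, ?_⟩
    · rw [Finset.sum_ite_mem, Finset.univ_inter, hs]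
    · rw [Finset.affineCombination_eq_linear_combination s _ _ hs] at hq
      funext x
      rw [← hq, Finset.sum_apply]
      simp only [ite_mul, zero_mul, Finset.sum_ite_mem, Finset.univ_inter,
        Pi.smul_apply, smul_eq_mul]
  · rintro ⟨w, h0, hs, rfl⟩
    apply mem_convexHull_of_exists_fintype w (h1 b) h0 hs (fun i => Set.mem_range_self i)
    funext x
    simp [Finset.sum_apply]

lemma H1_props {b : ℕ} {q : ℝ → ℝ} (hq : q ∈ H1 b) :
    Measurable q ∧ (∀ x, 0 ≤ q x) ∧ (∀ x, x ∉ I01 → q x = 0) ∧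
      Integrable q volume ∧ ∫ x, q x = 1 := by
  obtain ⟨w, h0, hs, rfl⟩ := mem_H1_iff.1 hq
  refine ⟨?_, ?_, ?_, ?_, ?_⟩
  · exact Finset.measurable_sum _ fun i _ => (measurable_h1 b i).const_mul (w i)
  · intro x; exact Finset.sum_nonneg fun i _ => mul_nonneg (h0 i) (h1_nonneg b i x)
  · intro x hx; exact Finset.sum_eq_zero fun i _ => by rw [h1_zero_outside hx, mul_zero]
  · exact integrable_finset_sum _ fun i _ => (integrable_h1 b i).const_mul (w i)
  · rw [integral_finset_sum _ fun i _ => (integrable_h1 b i).const_mul (w i)]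
    simp_rw [integral_const_mul, integral_h1, mul_one]
    exact hs

/-- the index of the bin of `[0,1)` (split in `b` bins) containing `x`. -/
def binIdx (b : ℕ) (x : ℝ) : ℕ := ⌊x * b⌋₊

lemma binIdx_lt {b : ℕ} (hb : 0 < b) {x : ℝ} (hx : x ∈ I01) : binIdx b x < b := by
  have hb' : (0:ℝ) < b := by exact_mod_cast hb
  have : x * b < b := by
    nlinarith [hx.2, hx.1]
  have h2 : (binIdx b x : ℝ) < b := (Nat.floor_le (by nlinarith [hx.1] : (0:ℝ) ≤ x * b)).trans_lt this
  exact_mod_cast h2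

lemma mem_bin_iff {b : ℕ} (hb : 0 < b) {x : ℝ} (hx : x ∈ I01) (i : ℕ) :
    x ∈ bin b i ↔ i = binIdx b x := by
  have hb' : (0:ℝ) < b := by exact_mod_cast hb
  have hx0 : 0 ≤ x * b := by nlinarith [hx.1]
  rw [bin, Set.mem_Ico, binIdx]
  constructor
  · rintro ⟨h1, h2⟩
    rw [div_le_iff₀ hb'] at h1
    rw [lt_div_iff₀ hb'] at h2
    symm
    rw [Nat.floor_eq_iff hx0]
    constructor
    · exact_mod_cast h1
    · push_cast; linarith
  · rintro rfl
    constructor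
    · rw [div_le_iff₀ hb']
      exact Nat.floor_le hx0
    · rw [lt_div_iff₀ hb']
      push_cast
      exact Nat.lt_floor_add_one _

lemma bin_disjoint {b : ℕ} (j₁ j₂ : Fin b) (hne : j₁ ≠ j₂) :
    Disjoint (bin b j₁) (bin b j₂) := by
  have hb : 0 < b := j₁.pos
  rw [Set.disjoint_left]
  intro x hx1 hx2
  have hxI : x ∈ I01 := bin_subset j₁.2 hx1
  have e1 : (j₁ : ℕ) = binIdx b x := (mem_bin_iff hb hxI _).1 hx1
  have e2 : (j₂ : ℕ) = binIdx b x := (mem_bin_iff hb hxI _).1 hx2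
  exact hne (Fin.ext (e1.trans e2.symm))

lemma approx1d {m b : ℕ} (hb : 0 < b) (i : Fin m) :
    ∃ g ∈ H1 b, ∫ x, |h1 m i x - g x| ≤ 4 * m / b := by
  classical
  have hm : 0 < m := i.pos
  have hm' : (0:ℝ) < m := by exact_mod_cast hm
  have hb' : (0:ℝ) < b := by exact_mod_cast hb
  set α : ℝ := (i : ℝ) / m with hα
  set β : ℝ := ((i : ℝ) + 1) / m with hβ
  set J : Set ℝ := bin m i with hJ
  have hJmeas : MeasurableSet J := measurableSet_Ico
  have hvolJ : volume J = ENNReal.ofReal (1/m) := volume_bin hm i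
  have hbinfin : ∀ j : ℕ, volume (bin b j ∩ J) ≠ ⊤ := fun j =>
    (lt_of_le_of_lt (measure_mono Set.inter_subset_left)
      (by rw [volume_bin hb]; exact ENNReal.ofReal_lt_top)).ne
  set w : Fin b → ℝ := fun j => m * (volume (bin b j ∩ J)).toReal with hw
  have hw0 : ∀ j, 0 ≤ w j := fun j => mul_nonneg hm'.le ENNReal.toReal_nonneg
  have hcover : J = ⋃ j ∈ Finset.univ, (bin b (j : Fin b) ∩ J) := by
    apply Set.Subset.antisymm
    · intro x hx
      have hxI : x ∈ I01 := bin_subset i.2 hx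
      have hlt : binIdx b x < b := binIdx_lt hb hxI
      simp only [Set.mem_iUnion]
      exact ⟨⟨binIdx b x, hlt⟩, Finset.mem_univ _, (mem_bin_iff hb hxI _).2 rfl, hx⟩
    · simp only [Set.iUnion_subset_iff]
      intro j _
      exact Set.inter_subset_right
  have hsumvol : ∑ j : Fin b, volume (bin b (j:ℕ) ∩ J) = volume J := by
    have hdisj : ((Finset.univ : Finset (Fin b)) : Set (Fin b)).PairwiseDisjoint
        (fun j : Fin b => bin b (j:ℕ) ∩ J) := by
      intro j₁ _ j₂ _ hne
      exact Disjoint.mono Set.inter_subset_left Set.inter_subset_left (bin_disjoint j₁ j₂ hne)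
    have hmeas : ∀ j ∈ (Finset.univ : Finset (Fin b)), MeasurableSet (bin b (j:ℕ) ∩ J) :=
      fun j _ => measurableSet_Ico.inter hJmeas
    have h2 : volume J = ∑ j : Fin b, volume (bin b (j:ℕ) ∩ J) := by
      conv_lhs => rw [hcover]
      exact measure_biUnion_finset hdisj hmeas
    exact h2.symm
  have hwsum : ∑ j, w j = 1 := by
    have hts : ∑ j : Fin b, (volume (bin b (j:ℕ) ∩ J)).toReal = (volume J).toReal := by
      rw [← hsumvol, ENNReal.toReal_sum]
      exact fun j _ => hbinfin j
    simp only [hw, ← Finset.mul_sum, hts, hvolJ,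
      ENNReal.toReal_ofReal (by positivity : (0:ℝ) ≤ 1/m)]
    field_simp
  set g : ℝ → ℝ := fun x => ∑ j, w j * h1 b j x with hg
  have hgH1 : g ∈ H1 b := mem_H1_iff.2 ⟨w, hw0, hwsum, rfl⟩
  have hgInt : Integrable g := integrable_finset_sum _ fun j _ => (integrable_h1 b j).const_mul _
  refine ⟨g, hgH1, ?_⟩
  set A : Set ℝ := bin b (binIdx b α) with hA
  set B : Set ℝ := bin b (binIdx b β) with hB
  have hpt : ∀ x, |h1 m i x - g x| ≤
      2 * m * (A.indicator (fun _ => (1:ℝ)) x + B.indicator (fun _ => (1:ℝ)) x) := by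
    intro x
    have hiA : 0 ≤ A.indicator (fun _ => (1:ℝ)) x := Set.indicator_nonneg (fun _ _ => zero_le_one) x
    have hiB : 0 ≤ B.indicator (fun _ => (1:ℝ)) x := Set.indicator_nonneg (fun _ _ => zero_le_one) x
    by_cases hx : x ∈ I01
    · set j₀ : ℕ := binIdx b x with hj₀
      have hlt : j₀ < b := binIdx_lt hb hx
      have hxbin : x ∈ bin b j₀ := (mem_bin_iff hb hx _).2 rfl
      have hgval : g x = m * ((volume (bin b j₀ ∩ J)).toReal * b) := by
        simp only [hg]
        rw [Finset.sum_eq_single (⟨j₀, hlt⟩ : Fin b)]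
        · have hh : h1 b ⟨j₀, hlt⟩ x = b := by
            rw [h1_eq, Set.indicator_of_mem]; exact hxbin
          rw [hh, hw]; ring
        · intro j _ hne
          have hh : h1 b j x = 0 := by
            rw [h1_eq, Set.indicator_of_notMem]
            intro hmem
            exact hne (Fin.ext ((mem_bin_iff hb hx _).1 hmem))
          rw [hh, mul_zero]
        · intro h; exact absurd (Finset.mem_univ _) h
      have hfval : h1 m i x = J.indicator (fun _ => (m:ℝ)) x := by rw [h1_eq]
      by_cases hsub : bin b j₀ ⊆ J
      · have heq : bin b j₀ ∩ J = bin b j₀ := Set.inter_eq_left.2 hsub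
        rw [hgval, heq, volume_bin hb, ENNReal.toReal_ofReal (by positivity : (0:ℝ) ≤ 1/b)]
        have hxJ : x ∈ J := hsub hxbin
        rw [hfval, Set.indicator_of_mem hxJ]
        have hsimp : (1:ℝ)/b * b = 1 := by field_simp
        rw [hsimp, mul_one, sub_self, abs_zero]
        positivity
      · by_cases hdis : bin b j₀ ∩ J = ∅
        · have hxJ : x ∉ J := fun hxJ => by
            have hmem : x ∈ bin b j₀ ∩ J := ⟨hxbin, hxJ⟩
            rw [hdis] at hmem; exact hmem
          rw [hgval, hdis, hfval, Set.indicator_of_notMem hxJ]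
          simp
          positivity
        · obtain ⟨z, hz1, hz2⟩ := Set.nonempty_iff_ne_empty.2 hdis
          have hz1' : (j₀:ℝ)/b ≤ z ∧ z < ((j₀:ℝ)+1)/b := hz1
          have hz2' : α ≤ z ∧ z < β := hz2
          have hns : ¬ (α ≤ (j₀:ℝ)/b ∧ ((j₀:ℝ)+1)/b ≤ β) := by
            intro ⟨hh1, hh2⟩
            exact hsub (Set.Ico_subset_Ico hh1 hh2)
          push_neg at hns
          have hkey : j₀ = binIdx b α ∨ j₀ = binIdx b β := by
            rcases lt_or_ge ((j₀:ℝ)/b) α with hL | hGE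
            · left
              have h1' : (j₀:ℝ) < α * b := by rw [div_lt_iff₀ hb'] at hL; linarith
              have h2' : α * b < (j₀:ℝ) + 1 := by
                have hαlt : α < ((j₀:ℝ)+1)/b := lt_of_le_of_lt hz2'.1 hz1'.2
                rw [lt_div_iff₀ hb'] at hαlt; linarith
              symm
              rw [binIdx, Nat.floor_eq_iff (by positivity : (0:ℝ) ≤ α * b)]
              exact ⟨by exact_mod_cast h1'.le, by push_cast; linarith⟩
            · right
              have hR : β < ((j₀:ℝ)+1)/b := hns hGE
              have h1' : (j₀:ℝ) < β * b := by
                have hlt2 : (j₀:ℝ)/b < β := lt_of_le_of_lt hz1'.1 hz2'.2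
                rw [div_lt_iff₀ hb'] at hlt2; linarith
              have h2' : β * b < (j₀:ℝ) + 1 := by rw [lt_div_iff₀ hb'] at hR; linarith
              symm
              rw [binIdx, Nat.floor_eq_iff (by positivity : (0:ℝ) ≤ β * b)]
              exact ⟨by exact_mod_cast h1'.le, by push_cast; linarith⟩
          have hgle : g x ≤ m := by
            have hv : (volume (bin b j₀ ∩ J)).toReal ≤ 1/b := by
              have hmono : volume (bin b j₀ ∩ J) ≤ ENNReal.ofReal (1/b) := by
                rw [← volume_bin hb j₀]; exact measure_mono Set.inter_subset_left
              calc (volume (bin b j₀ ∩ J)).toReal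
                  ≤ (ENNReal.ofReal (1/b)).toReal := ENNReal.toReal_mono ENNReal.ofReal_ne_top hmono
                _ = 1/b := ENNReal.toReal_ofReal (by positivity)
            rw [hgval]
            calc (m:ℝ) * ((volume (bin b j₀ ∩ J)).toReal * b) ≤ m * ((1/b) * b) := by
                  apply mul_le_mul_of_nonneg_left _ hm'.le
                  exact mul_le_mul_of_nonneg_right hv hb'.le
              _ = m := by field_simp
          have hg0' : 0 ≤ g x := by
            rw [hgval]; positivity
          have hf0' : 0 ≤ h1 m i x := h1_nonneg m i x
          have hfle : h1 m i x ≤ m := h1_le m i x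
          have hone : (1:ℝ) ≤ A.indicator (fun _ => (1:ℝ)) x + B.indicator (fun _ => (1:ℝ)) x := by
            rcases hkey with hk | hk
            · have hxA : x ∈ A := by rw [hA, ← hk]; exact hxbin
              rw [Set.indicator_of_mem hxA]; linarith
            · have hxB : x ∈ B := by rw [hB, ← hk]; exact hxbin
              rw [Set.indicator_of_mem hxB]; linarith
          rw [abs_le]
          constructor <;> nlinarith
    · have hf0 : h1 m i x = 0 := h1_zero_outside hx
      have hg0 : g x = 0 := by
        simp only [hg]
        exact Finset.sum_eq_zero fun j _ => by rw [h1_zero_outside hx, mul_zero]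
      rw [hf0, hg0, sub_zero, abs_zero]
      positivity
  have hIntL : Integrable (fun x => |h1 m i x - g x|) := ((integrable_h1 m i).sub hgInt).abs
  have hIntA : Integrable (A.indicator (fun _ => (1:ℝ))) := integrable_indicator_bin b _ 1
  have hIntB : Integrable (B.indicator (fun _ => (1:ℝ))) := integrable_indicator_bin b _ 1
  have hIntR : Integrable (fun x =>
      2 * (m:ℝ) * (A.indicator (fun _ => (1:ℝ)) x + B.indicator (fun _ => (1:ℝ)) x)) :=
    (hIntA.add hIntB).const_mul _
  calc ∫ x, |h1 m i x - g x|
      ≤ ∫ x, 2 * (m:ℝ) * (A.indicator (fun _ => (1:ℝ)) x + B.indicator (fun _ => (1:ℝ)) x) :=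
        integral_mono hIntL hIntR hpt
    _ = 2 * m * ((1:ℝ)/b + 1/b) := by
        rw [integral_const_mul, integral_add hIntA hIntB,
          integral_indicator_bin hb _ 1, integral_indicator_bin hb _ 1]
    _ = 4 * m / b := by field_simp; ring

lemma abs_prod_sub_prod {ι : Type*} [DecidableEq ι] (s : Finset ι) (a c : ι → ℝ)
    (ha : ∀ i, 0 ≤ a i) (hc : ∀ i, 0 ≤ c i) :
    |∏ i ∈ s, a i - ∏ i ∈ s, c i| ≤
      ∑ i ∈ s, |a i - c i| * ∏ j ∈ s.erase i, max (a j) (c j) := by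
  induction s using Finset.induction_on with
  | empty => simp
  | @insert x s hx ih =>
    have hpa : 0 ≤ ∏ i ∈ s, a i := Finset.prod_nonneg fun i _ => ha i
    have hmax : ∀ (t : Finset ι), 0 ≤ ∏ j ∈ t, max (a j) (c j) :=
      fun t => Finset.prod_nonneg fun j _ => le_trans (ha j) (le_max_left _ _)
    rw [Finset.prod_insert hx, Finset.prod_insert hx, Finset.sum_insert hx, Finset.erase_insert hx]
    have key : a x * ∏ i ∈ s, a i - c x * ∏ i ∈ s, c i
        = (a x - c x) * ∏ i ∈ s, a i + c x * (∏ i ∈ s, a i - ∏ i ∈ s, c i) := by ring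
    calc |a x * ∏ i ∈ s, a i - c x * ∏ i ∈ s, c i|
        ≤ |a x - c x| * ∏ i ∈ s, a i + c x * |∏ i ∈ s, a i - ∏ i ∈ s, c i| := by
          rw [key]
          refine (abs_add_le _ _).trans ?_
          rw [abs_mul, abs_mul, abs_of_nonneg hpa, abs_of_nonneg (hc x)]
      _ ≤ |a x - c x| * ∏ j ∈ s, max (a j) (c j)
            + ∑ i ∈ s, |a i - c i| * (max (a x) (c x) * ∏ j ∈ s.erase i, max (a j) (c j)) := by
          apply add_le_add
          · exact mul_le_mul_of_nonneg_left
              (Finset.prod_le_prod (fun i _ => ha i) (fun i _ => le_max_left _ _)) (abs_nonneg _)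
          · calc c x * |∏ i ∈ s, a i - ∏ i ∈ s, c i|
                ≤ c x * ∑ i ∈ s, |a i - c i| * ∏ j ∈ s.erase i, max (a j) (c j) :=
                  mul_le_mul_of_nonneg_left ih (hc x)
              _ = ∑ i ∈ s, c x * (|a i - c i| * ∏ j ∈ s.erase i, max (a j) (c j)) :=
                  Finset.mul_sum _ _ _
              _ ≤ ∑ i ∈ s, |a i - c i| * (max (a x) (c x) * ∏ j ∈ s.erase i, max (a j) (c j)) := by
                  apply Finset.sum_le_sum
                  intro i _
                  have hre : c x * (|a i - c i| * ∏ j ∈ s.erase i, max (a j) (c j))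
                      = |a i - c i| * (c x * ∏ j ∈ s.erase i, max (a j) (c j)) := by ring
                  rw [hre]
                  exact mul_le_mul_of_nonneg_left
                    (mul_le_mul_of_nonneg_right (le_max_right _ _) (hmax _)) (abs_nonneg _)
      _ = |a x - c x| * ∏ j ∈ s, max (a j) (c j)
            + ∑ i ∈ s, |a i - c i| * ∏ j ∈ (insert x s).erase i, max (a j) (c j) := by
          congr 1
          apply Finset.sum_congr rfl
          intro i hi
          rw [Finset.erase_insert_of_ne (fun h : x = i => hx (h ▸ hi)),
            Finset.prod_insert (fun hmem => hx (Finset.mem_of_mem_erase hmem))]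

lemma prod_diff_L1 {d : ℕ} (f g : Fin d → ℝ → ℝ)
    (hfI : ∀ j, Integrable (f j)) (hgI : ∀ j, Integrable (g j))
    (hf0 : ∀ j x, 0 ≤ f j x) (hg0 : ∀ j x, 0 ≤ g j x)
    (hf1 : ∀ j, ∫ x, f j x = 1) (hg1 : ∀ j, ∫ x, g j x = 1) :
    ∫ x : Fin d → ℝ, |∏ j, f j (x j) - ∏ j, g j (x j)| ≤
      2^d * ∑ j, ∫ t, |f j t - g j t| := by
  classical
  set φ : Fin d → Fin d → ℝ → ℝ := fun j j' =>
    if j' = j then (fun t => |f j t - g j t|) else (fun t => max (f j' t) (g j' t)) with hφ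
  have hφI : ∀ j j', Integrable (φ j j') := by
    intro j j'
    simp only [hφ]
    split_ifs
    · exact ((hfI j).sub (hgI j)).abs
    · exact (hfI j').sup (hgI j')
  have hmaxle : ∀ j', ∫ t, max (f j' t) (g j' t) ≤ 2 := by
    intro j'
    calc ∫ t, max (f j' t) (g j' t) ≤ ∫ t, (f j' t + g j' t) := by
          apply integral_mono ((hfI j').sup (hgI j')) ((hfI j').add (hgI j'))
          intro t
          exact max_le (le_add_of_nonneg_right (hg0 j' t)) (le_add_of_nonneg_left (hf0 j' t))
      _ = 2 := by rw [integral_add (hfI j') (hgI j'), hf1, hg1]; norm_num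
  have hpt : ∀ x : Fin d → ℝ, |∏ j, f j (x j) - ∏ j, g j (x j)| ≤
      ∑ j, ∏ j', φ j j' (x j') := by
    intro x
    refine (abs_prod_sub_prod Finset.univ (fun j => f j (x j)) (fun j => g j (x j))
      (fun j => hf0 j (x j)) (fun j => hg0 j (x j))).trans (le_of_eq ?_)
    apply Finset.sum_congr rfl
    intro j _
    rw [← Finset.mul_prod_erase Finset.univ (fun j' => φ j j' (x j')) (Finset.mem_univ j)]
    have h1 : φ j j (x j) = |f j (x j) - g j (x j)| := by simp [hφ]
    rw [h1]
    congr 1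
    apply Finset.prod_congr rfl
    intro j' hj'
    have : j' ≠ j := Finset.ne_of_mem_erase hj'
    simp [hφ, this]
  have hIntL : Integrable (fun x : Fin d → ℝ => |∏ j, f j (x j) - ∏ j, g j (x j)|) :=
    ((Integrable.fintype_prod hfI).sub (Integrable.fintype_prod hgI)).abs
  have hIntR : Integrable (fun x : Fin d → ℝ => ∑ j, ∏ j', φ j j' (x j')) :=
    integrable_finset_sum _ fun j _ => Integrable.fintype_prod (hφI j)
  calc ∫ x : Fin d → ℝ, |∏ j, f j (x j) - ∏ j, g j (x j)|
      ≤ ∫ x : Fin d → ℝ, ∑ j, ∏ j', φ j j' (x j') := integral_mono hIntL hIntR hpt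
    _ = ∑ j, ∫ x : Fin d → ℝ, ∏ j', φ j j' (x j') := by
        rw [integral_finset_sum (μ := volume) _ fun j _ => Integrable.fintype_prod (hφI j)]
    _ = ∑ j, ∏ j', ∫ t, φ j j' t := by
        apply Finset.sum_congr rfl
        intro j _
        exact integral_fintype_prod_volume_eq_prod (φ j)
    _ ≤ ∑ j, (∫ t, |f j t - g j t|) * 2^d := by
        apply Finset.sum_le_sum
        intro j _
        rw [← Finset.mul_prod_erase Finset.univ (fun j' => ∫ t, φ j j' t) (Finset.mem_univ j)]
        have h1 : ∫ t, φ j j t = ∫ t, |f j t - g j t| := by simp [hφ]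
        rw [h1]
        apply mul_le_mul_of_nonneg_left _ (integral_nonneg (fun t => abs_nonneg _))
        calc ∏ j' ∈ Finset.univ.erase j, ∫ t, φ j j' t
            ≤ ∏ j' ∈ Finset.univ.erase j, (2:ℝ) := by
              apply Finset.prod_le_prod
              · intro j' _
                exact integral_nonneg (fun t => by
                  simp only [hφ]; split_ifs
                  · exact abs_nonneg _
                  · exact le_trans (hf0 _ t) (le_max_left _ _))
              · intro j' hj'
                have hne : j' ≠ j := Finset.ne_of_mem_erase hj'
                have h2 : (fun j'' => ∫ t, φ j j'' t) j' = ∫ t, max (f j' t) (g j' t) := by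
                  simp [hφ, hne]
                calc ∫ t, φ j j' t = ∫ t, max (f j' t) (g j' t) := h2
                  _ ≤ 2 := hmaxle j'
          _ = 2 ^ (Finset.univ.erase j).card := by rw [Finset.prod_const]
          _ ≤ 2 ^ d := by
              apply pow_le_pow_right₀ one_le_two
              calc (Finset.univ.erase j).card ≤ (Finset.univ : Finset (Fin d)).card :=
                    Finset.card_le_card (Finset.erase_subset _ _)
                _ = d := Finset.card_univ.trans (Fintype.card_fin d)
    _ = 2^d * ∑ j, ∫ t, |f j t - g j t| := by
        rw [← Finset.sum_mul, mul_comm]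

/-- The unit cube `[0,1)^d`. -/
def cube (d : ℕ) : Set (Fin d → ℝ) := Set.univ.pi fun _ => Set.Ico (0 : ℝ) 1

/-- A density on `[0,1)^d`: measurable, nonnegative, integrating to one. -/
def IsDensity (d : ℕ) (p : (Fin d → ℝ) → ℝ) : Prop :=
  Measurable p ∧ (∀ x, 0 ≤ p x) ∧ ∫ x in cube d, p x = 1

/-- `L¹` distance on the unit cube. -/
def dist1 (d : ℕ) (p q : (Fin d → ℝ) → ℝ) : ℝ :=
  ∫ x in cube d, |p x - q x|

lemma measurableSet_cube (d : ℕ) : MeasurableSet (cube d) :=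
  MeasurableSet.univ_pi fun _ => measurableSet_Ico

lemma volume_cube (d : ℕ) : volume (cube d) = 1 := by
  rw [cube, volume_pi_pi]
  simp [Real.volume_Ico]

lemma mem_cube_iff {d : ℕ} (x : Fin d → ℝ) : x ∈ cube d ↔ ∀ j, x j ∈ I01 := by
  rw [cube, Set.mem_pi]
  exact ⟨fun h j => h j (Set.mem_univ j), fun h j _ => h j⟩

/-- integral over the cube equals the full integral for functions vanishing outside. -/
lemma setIntegral_cube_eq {d : ℕ} {F : (Fin d → ℝ) → ℝ} (hF : ∀ x, x ∉ cube d → F x = 0) :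
    ∫ x in cube d, F x = ∫ x, F x := by
  have h : (cube d).indicator F = F := by
    rw [Set.indicator_eq_self]
    intro x hx
    by_contra hmem
    exact hx (hF x hmem)
  rw [← integral_indicator (measurableSet_cube d), h]

lemma coarse {d : ℕ} (p : (Fin d → ℝ) → ℝ) (hp : IsDensity d p) {ε : ℝ} (hε : 0 < ε) :
    ∃ m : ℕ, 0 < m ∧ ∃ W : (Fin d → Fin m) → ℝ, (∀ S, 0 ≤ W S) ∧ (∑ S, W S) = 1 ∧
      dist1 d p (fun x => ∑ S, W S * ∏ j, h1 m (S j) (x j)) ≤ ε := by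
  classical
  obtain ⟨hpmeas, hp0, hp1⟩ := hp
  set ε' : ℝ := min (ε/4) (1/8) with hε'def
  have hε' : 0 < ε' := lt_min (by linarith) (by norm_num)
  have hε'le : ε' ≤ ε/4 := min_le_left _ _
  have hε'le8 : ε' ≤ 1/8 := min_le_right _ _
  -- p is integrable on the cube
  have hpInt : Integrable p (volume.restrict (cube d)) := by
    by_contra hc
    rw [integral_undef hc] at hp1
    norm_num at hp1
  set p' : (Fin d → ℝ) → ℝ := (cube d).indicator p with hp'def
  have hp'Int : Integrable p' volume :=
    (integrable_indicator_iff (measurableSet_cube d)).2 hpInt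
  -- continuous approximation
  obtain ⟨g, gsupp, hgL1, gcont, gInt⟩ := hp'Int.exists_hasCompactSupport_integral_sub_le hε'
  have hgL1' : ∫ x, |p' x - g x| ≤ ε' := by
    simpa [Real.norm_eq_abs] using hgL1
  -- uniform continuity
  obtain ⟨δ, hδ, hδ'⟩ := Metric.uniformContinuous_iff.mp
    (gsupp.uniformContinuous_of_continuous gcont) ε' hε'
  -- grid size
  set m : ℕ := ⌈1/δ⌉₊ + 1 with hmdef
  have hm : 0 < m := Nat.succ_pos _
  have hm' : (0:ℝ) < m := by exact_mod_cast hm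
  have h1m : 1/(m:ℝ) < δ := by
    have h1 : 1/δ ≤ (⌈1/δ⌉₊ : ℝ) := Nat.le_ceil _
    have h2 : (1:ℝ)/δ < m := by
      rw [hmdef]; push_cast; linarith
    rw [div_lt_iff₀ hδ] at h2
    rw [div_lt_iff₀ hm']
    nlinarith
  set anchor : (Fin d → Fin m) → (Fin d → ℝ) := fun S j => (S j : ℝ)/m with hanchor
  set v : (Fin d → Fin m) → ℝ := fun S => max (g (anchor S)) 0 with hvdef
  have hv0 : ∀ S, 0 ≤ v S := fun S => le_max_right _ _
  set prodH : (Fin d → Fin m) → (Fin d → ℝ) → ℝ := fun S x => ∏ j, h1 m (S j) (x j) with hprodHdef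
  set t : (Fin d → ℝ) → ℝ := fun x => ∑ S, (v S / (m:ℝ)^d) * prodH S x with htdef
  -- cell structure
  have hS0 : ∀ x, x ∈ cube d → ∀ j, x j ∈ I01 := fun x hx => (mem_cube_iff x).1 hx
  have hprodH_val : ∀ x (hx : x ∈ cube d) (S : Fin d → Fin m),
      prodH S x = if (∀ j, (S j : ℕ) = binIdx m (x j)) then (m:ℝ)^d else 0 := by
    intro x hx S
    split_ifs with hS
    · simp only [hprodHdef]
      have : ∀ j, h1 m (S j) (x j) = m := by
        intro j
        rw [h1_eq, Set.indicator_of_mem]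
        exact (mem_bin_iff hm (hS0 x hx j) _).2 (hS j)
      rw [Finset.prod_congr rfl (fun j _ => this j)]
      simp
    · push_neg at hS
      obtain ⟨j, hj⟩ := hS
      simp only [hprodHdef]
      apply Finset.prod_eq_zero (Finset.mem_univ j)
      rw [h1_eq, Set.indicator_of_notMem]
      intro hmem
      exact hj ((mem_bin_iff hm (hS0 x hx j) _).1 hmem)
  have hprodH_out : ∀ x, x ∉ cube d → ∀ S, prodH S x = 0 := by
    intro x hx S
    rw [mem_cube_iff] at hx
    push_neg at hx
    obtain ⟨j, hj⟩ := hx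
    exact Finset.prod_eq_zero (Finset.mem_univ j) (h1_zero_outside hj)
  -- the cell index of x in the cube
  have htval : ∀ x (hx : x ∈ cube d),
      t x = v (fun j => ⟨binIdx m (x j), binIdx_lt hm (hS0 x hx j)⟩) := by
    intro x hx
    set S₀ : Fin d → Fin m := fun j => ⟨binIdx m (x j), binIdx_lt hm (hS0 x hx j)⟩ with hS₀
    simp only [htdef]
    rw [Finset.sum_eq_single S₀]
    · rw [hprodH_val x hx S₀, if_pos (fun j => rfl)]
      field_simp
    · intro S _ hne
      rw [hprodH_val x hx S, if_neg, mul_zero]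
      intro hS
      exact hne (funext fun j => Fin.ext (hS j))
    · intro h; exact absurd (Finset.mem_univ _) h
  have htout : ∀ x, x ∉ cube d → t x = 0 := by
    intro x hx
    rw [htdef]
    exact Finset.sum_eq_zero fun S _ => by rw [hprodH_out x hx S, mul_zero]
  -- integrability
  have hprodHInt : ∀ S, Integrable (prodH S) volume := fun S =>
    Integrable.fintype_prod (fun j => integrable_h1 m (S j))
  have htInt : Integrable t volume :=
    integrable_finset_sum _ fun S _ => (hprodHInt S).const_mul _
  have hintProdH : ∀ S, ∫ x, prodH S x = 1 := by
    intro S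
    rw [hprodHdef]
    rw [integral_fintype_prod_volume_eq_prod (fun j => h1 m (S j))]
    simp [integral_h1]
  set c : ℝ := ∑ S, v S / (m:ℝ)^d with hcdef
  have htc : ∫ x, t x = c := by
    rw [htdef, integral_finset_sum _ fun S _ => (hprodHInt S).const_mul _]
    simp_rw [integral_const_mul, hintProdH, mul_one]
    rfl
  -- pointwise bound on the cube
  have hpt : ∀ x, x ∈ cube d → |p x - t x| ≤ |p x - g x| + ε' := by
    intro x hx
    set S₀ : Fin d → Fin m := fun j => ⟨binIdx m (x j), binIdx_lt hm (hS0 x hx j)⟩ with hS₀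
    have ht : t x = max (g (anchor S₀)) 0 := htval x hx
    have hdista : dist x (anchor S₀) < δ := by
      rw [dist_pi_lt_iff hδ]
      intro j
      have hbin : x j ∈ bin m (S₀ j) := (mem_bin_iff hm (hS0 x hx j) _).2 rfl
      have h1 : ((S₀ j : ℕ):ℝ)/m ≤ x j := hbin.1
      have h2 : x j < (((S₀ j : ℕ):ℝ)+1)/m := hbin.2
      have h2' : x j < ((S₀ j : ℕ):ℝ)/m + 1/m := by rw [← add_div]; exact h2
      simp only [hanchor]
      rw [Real.dist_eq, abs_of_nonneg (by linarith : (0:ℝ) ≤ x j - ((S₀ j : ℕ):ℝ)/m)]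
      linarith
    have hgg : |g x - g (anchor S₀)| ≤ ε' := by
      have := hδ' hdista
      rw [Real.dist_eq] at this
      exact this.le
    have hmax : |p x - max (g (anchor S₀)) 0| ≤ |p x - g (anchor S₀)| := by
      rcases le_or_gt 0 (g (anchor S₀)) with h | h
      · rw [max_eq_left h]
      · rw [max_eq_right h.le, sub_zero, abs_of_nonneg (hp0 x),
          abs_of_nonneg (by linarith [hp0 x] : 0 ≤ p x - g (anchor S₀))]
        linarith
    calc |p x - t x| = |p x - max (g (anchor S₀)) 0| := by rw [ht]
      _ ≤ |p x - g (anchor S₀)| := hmax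
      _ ≤ |p x - g x| + |g x - g (anchor S₀)| := abs_sub_le _ _ _
      _ ≤ |p x - g x| + ε' := by linarith
  -- integral bounds
  have hvolcube : (volume (cube d)).toReal = 1 := by rw [volume_cube]; simp
  have hIg : IntegrableOn g (cube d) volume := gInt.integrableOn
  have hIt : IntegrableOn t (cube d) volume := htInt.integrableOn
  have habs_pg : IntegrableOn (fun x => |p x - g x|) (cube d) volume := (hpInt.sub hIg).abs
  have habs_pt : IntegrableOn (fun x => |p x - t x|) (cube d) volume := (hpInt.sub hIt).abs
  have hconst : IntegrableOn (fun _ : Fin d → ℝ => ε') (cube d) volume :=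
    integrableOn_const (by rw [volume_cube]; norm_num)
  have hcube_pg : ∫ x in cube d, |p x - g x| ≤ ε' := by
    have he : ∫ x in cube d, |p x - g x| = ∫ x in cube d, |p' x - g x| := by
      apply setIntegral_congr_fun (measurableSet_cube d)
      intro x hx
      dsimp only
      rw [hp'def, Set.indicator_of_mem hx]
    rw [he]
    calc ∫ x in cube d, |p' x - g x| ≤ ∫ x, |p' x - g x| :=
          setIntegral_le_integral (hp'Int.sub gInt).abs
            (Filter.Eventually.of_forall fun x => abs_nonneg _)
      _ ≤ ε' := hgL1'
  have hηbound : ∫ x in cube d, |p x - t x| ≤ 2 * ε' := by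
    calc ∫ x in cube d, |p x - t x| ≤ ∫ x in cube d, (|p x - g x| + ε') :=
          setIntegral_mono_on habs_pt (habs_pg.add hconst) (measurableSet_cube d) hpt
      _ = (∫ x in cube d, |p x - g x|) + (volume (cube d)).toReal * ε' := by
          rw [integral_add habs_pg hconst, setIntegral_const, measureReal_def, smul_eq_mul]
      _ ≤ ε' + 1 * ε' := by rw [hvolcube]; linarith [hcube_pg]
      _ = 2 * ε' := by ring
  -- c is close to 1
  have htcube : ∫ x in cube d, t x = c := by rw [setIntegral_cube_eq htout, htc]
  have hc1 : |c - 1| ≤ 2 * ε' := by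
    have hsub : ∫ x in cube d, (t x - p x) = c - 1 := by
      rw [integral_sub hIt hpInt, htcube, hp1]
    rw [← hsub]
    calc |∫ x in cube d, (t x - p x)| ≤ ∫ x in cube d, |t x - p x| := by
          simpa [Real.norm_eq_abs] using
            norm_integral_le_integral_norm (μ := volume.restrict (cube d)) (fun x => t x - p x)
      _ = ∫ x in cube d, |p x - t x| := by
          apply setIntegral_congr_fun (measurableSet_cube d)
          intro x _
          exact abs_sub_comm _ _
      _ ≤ 2 * ε' := hηbound
  have hcge : (3:ℝ)/4 ≤ c := by
    have : |c - 1| ≤ 1/4 := le_trans hc1 (by linarith)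
    have := abs_le.1 this
    linarith [this.1]
  have hcpos : 0 < c := by linarith
  -- the weights
  refine ⟨m, hm, fun S => v S / (c * (m:ℝ)^d), fun S => div_nonneg (hv0 S) (by positivity), ?_, ?_⟩
  · have hsumv : ∑ S, v S = c * (m:ℝ)^d := by
      have : c = (∑ S, v S) / (m:ℝ)^d := by rw [hcdef, Finset.sum_div]
      rw [this]
      field_simp
    rw [← Finset.sum_div, hsumv]
    field_simp
  · -- identify the candidate with t/c
    have hq : ∀ x, (∑ S, (v S / (c * (m:ℝ)^d)) * ∏ j, h1 m (S j) (x j)) = t x / c := by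
      intro x
      simp only [htdef]
      rw [Finset.sum_div]
      apply Finset.sum_congr rfl
      intro S _
      simp only [hprodHdef]
      rw [mul_comm c ((m:ℝ)^d), ← div_div, div_mul_eq_mul_div]
    simp only [dist1, hq]
    have hItc : IntegrableOn (fun x => t x / c) (cube d) volume := hIt.div_const c
    have habs_ptc : IntegrableOn (fun x => |p x - t x / c|) (cube d) volume := (hpInt.sub hItc).abs
    have htmul : IntegrableOn (fun x => t x * |1 - 1/c|) (cube d) volume := hIt.mul_const _
    calc ∫ x in cube d, |p x - t x / c|
        ≤ ∫ x in cube d, (|p x - t x| + t x * |1 - 1/c|) := by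
          apply setIntegral_mono_on habs_ptc (habs_pt.add htmul) (measurableSet_cube d)
          intro x hx
          simp only [Pi.add_apply]
          have ht0 : 0 ≤ t x := by
            rw [htval x hx]
            exact hv0 _
          have heq : |t x - t x / c| = t x * |1 - 1/c| := by
            have hr : t x - t x / c = t x * (1 - 1/c) := by ring
            rw [hr, abs_mul, abs_of_nonneg ht0]
          calc |p x - t x / c| ≤ |p x - t x| + |t x - t x / c| := abs_sub_le _ _ _
            _ = |p x - t x| + t x * |1 - 1/c| := by rw [heq]
      _ = (∫ x in cube d, |p x - t x|) + (∫ x in cube d, t x) * |1 - 1/c| := by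
          rw [integral_add habs_pt htmul, integral_mul_const]
      _ ≤ 2 * ε' + |c - 1| := by
          have h1 : c * (1 - 1/c) = c - 1 := by field_simp
          have hcabs : c * |1 - 1/c| = |c - 1| := by
            rw [← h1, abs_mul, abs_of_pos hcpos]
          rw [htcube, hcabs]
          linarith [hηbound]
      _ ≤ 4 * ε' := by linarith [hc1]
      _ ≤ ε := by linarith [hε'le]

/-- Multi-view histograms `H_{d,b}^k`: mixtures of at most `k` products of 1-d histograms. -/
def multiView (d b k : ℕ) : Set ((Fin d → ℝ) → ℝ) :=
  { f | ∃ (w : Fin k → ℝ) (P : Fin k → Fin d → ℝ → ℝ),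
      (∀ i, 0 ≤ w i) ∧ (∑ i, w i = 1) ∧ (∀ i j, P i j ∈ H1 b) ∧
      f = fun x => ∑ i, w i * ∏ j, P i j (x j) }

/-- Tucker histograms `H̃_{d,b}^k`. -/
def tucker (d b k : ℕ) : Set ((Fin d → ℝ) → ℝ) :=
  { f | ∃ (W : (Fin d → Fin k) → ℝ) (P : Fin d → Fin k → ℝ → ℝ),
      (∀ S, 0 ≤ W S) ∧ (∑ S, W S = 1) ∧ (∀ i j, P i j ∈ H1 b) ∧
      f = fun x => ∑ S, W S * ∏ i, P i (S i) (x i) }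

/-- The probability measure on `[0,1)^d` with density `p`. -/
def densMeasure (d : ℕ) (p : (Fin d → ℝ) → ℝ) : Measure (Fin d → ℝ) :=
  (volume.restrict (cube d)).withDensity fun x => ENNReal.ofReal (p x)

/-- The `n`-fold product measure of the measure with density `p` (iid samples). -/
def sampleMeasure (d n : ℕ) (p : (Fin d → ℝ) → ℝ) : Measure (Fin n → Fin d → ℝ) :=
  Measure.pi fun _ => densMeasure d p

lemma sum_extend {M : Type*} [AddCommMonoid M] {N k : ℕ} (hk : N ≤ k) (F₀ : ℕ → M)
    (h0 : ∀ n, N ≤ n → F₀ n = 0) : ∑ i : Fin k, F₀ (i:ℕ) = ∑ i : Fin N, F₀ (i:ℕ) := by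
  rw [Fin.sum_univ_eq_sum_range F₀ k, Fin.sum_univ_eq_sum_range F₀ N]
  exact (Finset.sum_subset (Finset.range_subset_range.2 hk)
    (fun n _ hn => h0 n (by simpa using hn))).symm

lemma mixture_mem_multiView {d b k m : ℕ} (hb : 0 < b) (hk : m^d ≤ k)
    (W : (Fin d → Fin m) → ℝ) (hW0 : ∀ S, 0 ≤ W S) (hW1 : ∑ S, W S = 1)
    (G : Fin m → ℝ → ℝ) (hG : ∀ i, G i ∈ H1 b) :
    (fun x => ∑ S, W S * ∏ j, G (S j) (x j)) ∈ multiView d b k := by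
  classical
  set N := m^d with hN
  have hcard : Fintype.card (Fin d → Fin m) = N := by simp [hN]
  set e : (Fin d → Fin m) ≃ Fin N := Fintype.equivFinOfCardEq hcard with he
  set w : Fin k → ℝ := fun i => if h : (i:ℕ) < N then W (e.symm ⟨i, h⟩) else 0 with hw
  set P : Fin k → Fin d → ℝ → ℝ :=
    fun i j => if h : (i:ℕ) < N then G ((e.symm ⟨(i:ℕ), h⟩) j) else h1 b ⟨0, hb⟩ with hP
  have hkey : ∀ (F : (Fin d → Fin m) → ℝ),
      ∑ i : Fin k, (if h : (i:ℕ) < N then F (e.symm ⟨(i:ℕ), h⟩) else 0) = ∑ S, F S := by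
    intro F
    set F₀ : ℕ → ℝ := fun n => if h : n < N then F (e.symm ⟨n, h⟩) else 0 with hF₀
    have h1' : ∑ i : Fin k, F₀ (i:ℕ) = ∑ i : Fin N, F₀ (i:ℕ) :=
      sum_extend hk F₀ (fun n hn => dif_neg (by omega))
    have h2 : ∑ i : Fin N, F₀ (i:ℕ) = ∑ i : Fin N, F (e.symm i) := by
      apply Finset.sum_congr rfl
      intro i _
      simp only [hF₀]
      rw [dif_pos i.2]
    calc ∑ i : Fin k, F₀ (i:ℕ) = ∑ i : Fin N, F₀ (i:ℕ) := h1'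
      _ = ∑ i : Fin N, F (e.symm i) := h2
      _ = ∑ S, F S := Equiv.sum_comp e.symm F
  refine ⟨w, P, ?_, ?_, ?_, ?_⟩
  · intro i
    simp only [hw]
    split_ifs with h
    · exact hW0 _
    · exact le_refl 0
  · rw [hw]; rw [hkey W]; exact hW1
  · intro i j
    simp only [hP]
    split_ifs with h
    · exact hG _
    · exact subset_convexHull ℝ _ (Set.mem_range_self _)
  · funext x
    rw [← hkey (fun S => W S * ∏ j, G (S j) (x j))]
    apply Finset.sum_congr rfl
    intro i _
    simp only [hw, hP]
    by_cases h : (i:ℕ) < N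
    · rw [dif_pos h, dif_pos h]
      congr 1
      apply Finset.prod_congr rfl
      intro j _
      rw [dif_pos h]
    · rw [dif_neg h, dif_neg h, zero_mul]

lemma main_exists {d : ℕ} (p : (Fin d → ℝ) → ℝ) (hp : IsDensity d p) :
    ∀ ε > (0:ℝ), ∃ B K : ℕ, ∀ b ≥ B, ∀ k ≥ K,
      ∃ q ∈ multiView d b k, dist1 d p q ≤ ε := by
  intro ε hε
  obtain ⟨m, hm, W, hW0, hW1, hWdist⟩ := coarse p hp (half_pos hε)
  set C : ℝ := 2^d * ((d:ℝ) * (4 * m)) with hC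
  have hC0 : 0 ≤ C := by positivity
  refine ⟨max 1 ⌈2 * C / ε⌉₊, m^d, ?_⟩
  intro b hb k hk
  have hb1 : 0 < b := lt_of_lt_of_le Nat.one_pos (le_trans (le_max_left _ _) hb)
  have hb' : (0:ℝ) < b := by exact_mod_cast hb1
  have hbC : 2 * C / ε ≤ (b:ℝ) := by
    have h1 : ⌈2 * C / ε⌉₊ ≤ b := le_trans (le_max_right _ _) hb
    calc 2 * C / ε ≤ (⌈2 * C / ε⌉₊ : ℝ) := Nat.le_ceil _
      _ ≤ b := by exact_mod_cast h1
  have hCb : C / b ≤ ε / 2 := by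
    rw [div_le_div_iff₀ hb' (by norm_num : (0:ℝ) < 2)]
    rw [div_le_iff₀ hε] at hbC
    nlinarith
  -- fine approximations of the coarse bins
  have hgs : ∀ i : Fin m, ∃ g ∈ H1 b, ∫ x, |h1 m i x - g x| ≤ 4 * m / b :=
    fun i => approx1d hb1 i
  choose G hGmem hGerr using hgs
  have hGprops : ∀ i, Measurable (G i) ∧ (∀ x, 0 ≤ G i x) ∧ (∀ x, x ∉ I01 → G i x = 0) ∧
      Integrable (G i) volume ∧ ∫ x, G i x = 1 := fun i => H1_props (hGmem i)
  set q : (Fin d → ℝ) → ℝ := fun x => ∑ S, W S * ∏ j, G (S j) (x j) with hq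
  have hqmem : q ∈ multiView d b k := mixture_mem_multiView hb1 hk W hW0 hW1 G hGmem
  refine ⟨q, hqmem, ?_⟩
  set q₀ : (Fin d → ℝ) → ℝ := fun x => ∑ S, W S * ∏ j, h1 m (S j) (x j) with hq₀
  -- per-component product bound
  have hprod : ∀ S : Fin d → Fin m,
      ∫ x : Fin d → ℝ, |(∏ j, h1 m (S j) (x j)) - ∏ j, G (S j) (x j)| ≤ C / b := by
    intro S
    have h1' := prod_diff_L1 (fun j => h1 m (S j)) (fun j => G (S j))
      (fun j => integrable_h1 m (S j)) (fun j => (hGprops (S j)).2.2.2.1)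
      (fun j x => h1_nonneg m (S j) x) (fun j x => (hGprops (S j)).2.1 x)
      (fun j => integral_h1 m (S j)) (fun j => (hGprops (S j)).2.2.2.2)
    refine h1'.trans ?_
    have h2 : ∑ j : Fin d, ∫ t, |h1 m (S j) t - G (S j) t| ≤ (d:ℝ) * (4 * m / b) := by
      calc ∑ j : Fin d, ∫ t, |h1 m (S j) t - G (S j) t|
          ≤ ∑ _j : Fin d, 4 * (m:ℝ) / b := Finset.sum_le_sum (fun j _ => hGerr (S j))
        _ = (d:ℝ) * (4 * m / b) := by
            rw [Finset.sum_const, Finset.card_univ, Fintype.card_fin, nsmul_eq_mul]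
    calc (2:ℝ)^d * ∑ j : Fin d, ∫ t, |h1 m (S j) t - G (S j) t|
        ≤ 2^d * ((d:ℝ) * (4 * m / b)) := by
          apply mul_le_mul_of_nonneg_left h2 (by positivity)
      _ = C / b := by rw [hC]; field_simp
  -- integrability of the products and mixtures
  have hPInt : ∀ S : Fin d → Fin m, Integrable (fun x : Fin d → ℝ => ∏ j, h1 m (S j) (x j)) :=
    fun S => Integrable.fintype_prod (fun j => integrable_h1 m (S j))
  have hGInt : ∀ S : Fin d → Fin m, Integrable (fun x : Fin d → ℝ => ∏ j, G (S j) (x j)) :=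
    fun S => Integrable.fintype_prod (fun j => (hGprops (S j)).2.2.2.1)
  have hq₀Int : Integrable q₀ volume := integrable_finset_sum _ fun S _ => (hPInt S).const_mul _
  have hqInt : Integrable q volume := integrable_finset_sum _ fun S _ => (hGInt S).const_mul _
  -- mixture bound
  have hmix : ∫ x : Fin d → ℝ, |q₀ x - q x| ≤ C / b := by
    have hptw : ∀ x : Fin d → ℝ, |q₀ x - q x| ≤
        ∑ S, W S * |(∏ j, h1 m (S j) (x j)) - ∏ j, G (S j) (x j)| := by
      intro x
      have hd : q₀ x - q x = ∑ S, W S * ((∏ j, h1 m (S j) (x j)) - ∏ j, G (S j) (x j)) := by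
        simp only [hq₀, hq, ← Finset.sum_sub_distrib, mul_sub]
      rw [hd]
      refine (Finset.abs_sum_le_sum_abs _ _).trans (le_of_eq ?_)
      apply Finset.sum_congr rfl
      intro S _
      rw [abs_mul, abs_of_nonneg (hW0 S)]
    have hIntL : Integrable (fun x : Fin d → ℝ => |q₀ x - q x|) := (hq₀Int.sub hqInt).abs
    have hIntT : ∀ S : Fin d → Fin m, Integrable
        (fun x : Fin d → ℝ => W S * |(∏ j, h1 m (S j) (x j)) - ∏ j, G (S j) (x j)|) :=
      fun S => (((hPInt S).sub (hGInt S)).abs).const_mul _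
    calc ∫ x : Fin d → ℝ, |q₀ x - q x|
        ≤ ∫ x : Fin d → ℝ, ∑ S, W S * |(∏ j, h1 m (S j) (x j)) - ∏ j, G (S j) (x j)| :=
          integral_mono hIntL (integrable_finset_sum _ fun S _ => hIntT S) hptw
      _ = ∑ S, W S * ∫ x : Fin d → ℝ, |(∏ j, h1 m (S j) (x j)) - ∏ j, G (S j) (x j)| := by
          rw [integral_finset_sum _ fun S _ => hIntT S]
          exact Finset.sum_congr rfl fun S _ => integral_const_mul _ _
      _ ≤ ∑ S, W S * (C / b) := by
          apply Finset.sum_le_sum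
          intro S _
          exact mul_le_mul_of_nonneg_left (hprod S) (hW0 S)
      _ = C / b := by rw [← Finset.sum_mul, hW1, one_mul]
  -- triangle inequality on the cube
  have hpInt : Integrable p (volume.restrict (cube d)) := by
    by_contra hc
    rw [dist1] at hWdist
    have := hp.2.2
    rw [integral_undef hc] at this
    norm_num at this
  have hq₀out : ∀ x, x ∉ cube d → q₀ x - q x = 0 := by
    intro x hx
    rw [mem_cube_iff] at hx
    push_neg at hx
    obtain ⟨j, hj⟩ := hx
    have h1z : q₀ x = 0 := Finset.sum_eq_zero fun S _ => by
      rw [Finset.prod_eq_zero (Finset.mem_univ j) (h1_zero_outside hj), mul_zero]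
    have h2z : q x = 0 := Finset.sum_eq_zero fun S _ => by
      rw [Finset.prod_eq_zero (Finset.mem_univ j) ((hGprops (S j)).2.2.1 _ hj), mul_zero]
    rw [h1z, h2z, sub_zero]
  have htri : dist1 d p q ≤ dist1 d p q₀ + ∫ x in cube d, |q₀ x - q x| := by
    rw [dist1, dist1]
    have hI1 : IntegrableOn (fun x => |p x - q₀ x|) (cube d) volume :=
      (hpInt.sub hq₀Int.integrableOn).abs
    have hI2 : IntegrableOn (fun x => |q₀ x - q x|) (cube d) volume :=
      ((hq₀Int.integrableOn).sub hqInt.integrableOn).abs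
    have hIL : IntegrableOn (fun x => |p x - q x|) (cube d) volume :=
      (hpInt.sub hqInt.integrableOn).abs
    calc ∫ x in cube d, |p x - q x|
        ≤ ∫ x in cube d, (|p x - q₀ x| + |q₀ x - q x|) := by
          apply setIntegral_mono_on hIL (hI1.add hI2) (measurableSet_cube d)
          intro x _
          exact abs_sub_le _ _ _
      _ = (∫ x in cube d, |p x - q₀ x|) + ∫ x in cube d, |q₀ x - q x| :=
          integral_add hI1 hI2
  have hcube_le : ∫ x in cube d, |q₀ x - q x| ≤ ∫ x, |q₀ x - q x| :=
    setIntegral_le_integral ((hq₀Int.sub hqInt).abs)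
      (Filter.Eventually.of_forall fun x => abs_nonneg _)
  calc dist1 d p q ≤ dist1 d p q₀ + ∫ x in cube d, |q₀ x - q x| := htri
    _ ≤ ε/2 + C/b := add_le_add hWdist (hcube_le.trans hmix)
    _ ≤ ε/2 + ε/2 := add_le_add_right hCb _
    _ = ε := by ring

lemma dist1_nonneg (d : ℕ) (p q : (Fin d → ℝ) → ℝ) : 0 ≤ dist1 d p q :=
  integral_nonneg fun _ => abs_nonneg _

lemma iInf_dist1_nonneg (d : ℕ) (p : (Fin d → ℝ) → ℝ) (S : Set ((Fin d → ℝ) → ℝ)) :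
    0 ≤ ⨅ q ∈ S, dist1 d p q :=
  Real.iInf_nonneg fun _ => Real.iInf_nonneg fun _ => dist1_nonneg _ _ _

lemma iInf_dist1_le (d : ℕ) (p : (Fin d → ℝ) → ℝ) (S : Set ((Fin d → ℝ) → ℝ))
    (q0 : (Fin d → ℝ) → ℝ) (hq0 : q0 ∈ S) :
    (⨅ q ∈ S, dist1 d p q) ≤ dist1 d p q0 := by
  have hbdd : BddBelow (Set.range fun q => ⨅ _ : q ∈ S, dist1 d p q) := by
    refine ⟨0, ?_⟩
    rintro y ⟨q, rfl⟩
    exact Real.iInf_nonneg fun _ => dist1_nonneg _ _ _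
  refine (ciInf_le hbdd q0).trans ?_
  exact ciInf_le (by
    refine ⟨0, ?_⟩
    rintro y ⟨_, rfl⟩
    exact dist1_nonneg _ _ _) hq0


/-- Lemma `lrbias`: for any density `p` on `[0,1)^d`, the multi-view
histogram approximation error `inf_{q ∈ H_{d,b}^k} ‖p − q‖₁` can be made at most `ε` for all
sufficiently large `b` and `k`; equivalently it tends to `0` along any `b(n), k(n) → ∞`. -/
theorem multiview_bias_to_zero (d : ℕ) (hd : 0 < d) (p : (Fin d → ℝ) → ℝ)
    (hp : IsDensity d p) :
    (∀ ε > (0 : ℝ), ∃ B K : ℕ, ∀ b ≥ B, ∀ k ≥ K,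
        (sInf ((fun q => dist1 d p q) '' (multiView d b k))) ≤ ε) ∧
    (∀ b k : ℕ → ℕ, Tendsto b atTop atTop → Tendsto k atTop atTop →
      Tendsto (fun n => sInf ((fun q => dist1 d p q) '' (multiView d (b n) (k n)))) atTop (nhds 0)) := by
  constructor
  · intro ε hε
    obtain ⟨B, K, hBK⟩ := main_exists p hp ε hε
    refine ⟨B, K, fun b hb k hk => ?_⟩
    obtain ⟨q, hqm, hqd⟩ := hBK b hb k hk
    exact (csInf_le ⟨0, by rintro _ ⟨q', _, rfl⟩; exact dist1_nonneg _ _ _⟩ (Set.mem_image_of_mem (fun q => dist1 d p q) hqm)).trans hqd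
  · intro b k hbt hkt
    rw [Metric.tendsto_atTop]
    intro ε hε
    obtain ⟨B, K, hBK⟩ := main_exists p hp (ε/2) (half_pos hε)
    obtain ⟨N1, hN1⟩ := Filter.eventually_atTop.mp (hbt.eventually_ge_atTop B)
    obtain ⟨N2, hN2⟩ := Filter.eventually_atTop.mp (hkt.eventually_ge_atTop K)
    refine ⟨max N1 N2, fun n hn => ?_⟩
    obtain ⟨q, hqm, hqd⟩ := hBK (b n) (hN1 n (le_trans (le_max_left _ _) hn))
      (k n) (hN2 n (le_trans (le_max_right _ _) hn))
    have hle : sInf ((fun q => dist1 d p q) '' multiView d (b n) (k n)) ≤ ε/2 :=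
      (csInf_le ⟨0, by rintro _ ⟨q', _, rfl⟩; exact dist1_nonneg _ _ _⟩ (Set.mem_image_of_mem (fun q => dist1 d p q) hqm)).trans hqd
    have hge : 0 ≤ sInf ((fun q => dist1 d p q) '' multiView d (b n) (k n)) :=
      Real.sInf_nonneg (by rintro _ ⟨q', _, rfl⟩; exact dist1_nonneg _ _ _)
    rw [Real.dist_eq, sub_zero, abs_of_nonneg hge]
    linarith
end
end

section
/- For every b ∈ ℕ and every 0 < ε ≤ 1, the ℓ¹ covering number of the probability simplex satisfies N(Δ_b, ε) ≤ (2b/ε)^b; i.e. there exists a finite set S ⊆ Δ_b with |S| ≤ (2b/ε)^b such that for every w ∈ Δ_b there is s ∈ S with ‖w − s‖₁ ≤ ε. -/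
noncomputable section

/-- The probability simplex `Δ_b` in `ℝ^b`. -/
def probSimplex (b : ℕ) : Set (Fin b → ℝ) :=
  { w | (∀ i, 0 ≤ w i) ∧ ∑ i, w i = 1 }

/-- Lemma `histcover`: for `0 < ε ≤ 1`, the simplex `Δ_b` admits an
`ℓ¹` `ε`-cover by at most `(2b/ε)^b` of its own points. -/
theorem simplex_covering (b : ℕ) (ε : ℝ) (hε0 : 0 < ε) (hε1 : ε ≤ 1) :
    ∃ S : Finset (Fin b → ℝ),
      ↑S ⊆ probSimplex b ∧
      (S.card : ℝ) ≤ (2 * b / ε) ^ b ∧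
      ∀ w ∈ probSimplex b, ∃ s ∈ S, ∑ i, |w i - s i| ≤ ε := by
  obtain _ | n := b
  · refine ⟨∅, by simp, by simp, ?_⟩
    intro w hw
    have := hw.2
    simp at this
  · set k : ℕ := max 1 ⌈2 * (n : ℝ) / ε⌉₊ with hkdef
    have hk1 : 1 ≤ k := le_max_left _ _
    have hkpos : (0:ℝ) < k := by exact_mod_cast hk1
    have hkge : 2 * (n:ℝ) / ε ≤ k := by
      refine le_trans (Nat.le_ceil _) (Nat.cast_le.mpr ?_)
      rw [hkdef]
      exact le_max_right _ _
    have hX : (k:ℝ) + 1 ≤ 2 * (↑(n+1)) / ε := by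
      have h1 : (k:ℝ) ≤ 2 * (n:ℝ) / ε + 1 := by
        have hnn : (0:ℝ) ≤ 2 * (n:ℝ) / ε := by positivity
        have h2 : (⌈2 * (n : ℝ) / ε⌉₊ : ℝ) ≤ 2 * (n:ℝ) / ε + 1 :=
          (Nat.ceil_lt_add_one hnn).le
        have h3 : (1:ℝ) ≤ 2 * (n:ℝ) / ε + 1 := by linarith
        rcases max_cases 1 ⌈2 * (n : ℝ) / ε⌉₊ with ⟨h, _⟩ | ⟨h, _⟩ <;>
          rw [hkdef, h] <;> push_cast <;> linarith
      have h2 : (2:ℝ) ≤ 2 / ε := by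
        rw [le_div_iff₀ hε0]; linarith
      push_cast
      rw [mul_add, add_div]
      have : 2 * (n:ℝ) / ε + 2 / ε = 2 * (n:ℝ) / ε + 2 / ε := rfl
      calc (k:ℝ) + 1 ≤ 2 * (n:ℝ) / ε + 2 := by linarith
        _ ≤ 2 * (n:ℝ) / ε + 2 / ε := by linarith
        _ = 2 * (n:ℝ) / ε + 2 * 1 / ε := by ring
    have hXge1 : (1:ℝ) ≤ 2 * (↑(n+1)) / ε := by
      have : (1:ℝ) ≤ (k:ℝ) + 1 := by linarith
      linarith
    set M : Finset (Fin n → ℕ) :=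
      (Fintype.piFinset fun _ => Finset.range (k+1)).filter (fun m => ∑ i, m i ≤ k) with hM
    set f : (Fin n → ℕ) → (Fin (n+1) → ℝ) :=
      fun m => Fin.cons (1 - ∑ i, (m i : ℝ)/k) (fun i => (m i : ℝ)/k) with hf
    refine ⟨M.image f, ?_, ?_, ?_⟩
    · intro s hs
      simp only [Finset.coe_image, Set.mem_image, Finset.mem_coe] at hs
      obtain ⟨m, hm, rfl⟩ := hs
      rw [hM, Finset.mem_filter] at hm
      have hsum : ∑ i, (m i : ℝ)/k ≤ 1 := by
        rw [← Finset.sum_div, div_le_one hkpos]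
        exact_mod_cast hm.2
      constructor
      · intro j
        refine Fin.cases ?_ ?_ j
        · rw [hf]; simp only [Fin.cons_zero]; linarith
        · intro i; rw [hf]; simp only [Fin.cons_succ]; positivity
      · rw [hf, Fin.sum_univ_succ]
        simp only [Fin.cons_zero, Fin.cons_succ]
        ring
    · calc ((M.image f).card : ℝ) ≤ (M.card : ℝ) := by exact_mod_cast Finset.card_image_le
        _ ≤ ((k+1)^n : ℕ) := by
            have : M.card ≤ (k+1)^n := by
              refine le_trans (Finset.card_filter_le _ _) ?_
              rw [Fintype.card_piFinset]
              simp [Finset.card_range]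
            exact_mod_cast this
        _ ≤ (2 * (↑(n+1)) / ε) ^ n := by
            push_cast at hX ⊢
            exact pow_le_pow_left₀ (by positivity) hX n
        _ ≤ (2 * (↑(n+1)) / ε) ^ (n+1) := pow_le_pow_right₀ hXge1 (Nat.le_succ n)
        _ = (2 * (↑(n+1)) / ε) ^ (n+1) := rfl
    · intro w hw
      obtain ⟨hw0, hw1⟩ := hw
      have hle1 : ∀ j, w j ≤ 1 := by
        intro j
        rw [← hw1]
        exact Finset.single_le_sum (fun i _ => hw0 i) (Finset.mem_univ j)
      set m : Fin n → ℕ := fun i => ⌊(k:ℝ) * w i.succ⌋₊ with hm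
      have hfl : ∀ i : Fin n, (m i : ℝ) ≤ (k:ℝ) * w i.succ := by
        intro i; exact Nat.floor_le (mul_nonneg hkpos.le (hw0 i.succ))
      have hfu : ∀ i : Fin n, (k:ℝ) * w i.succ < m i + 1 := fun i => Nat.lt_floor_add_one _
      have htail : ∑ i : Fin n, w i.succ = 1 - w 0 := by
        rw [Fin.sum_univ_succ] at hw1; linarith
      have hmM : m ∈ M := by
        rw [hM, Finset.mem_filter]
        constructor
        · rw [Fintype.mem_piFinset]
          intro i
          rw [Finset.mem_range, Nat.lt_succ_iff]
          have : (m i : ℝ) ≤ (k:ℝ) := le_trans (hfl i) (by nlinarith [hle1 i.succ, hw0 i.succ])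
          exact_mod_cast this
        · have : (∑ i, (m i:ℝ)) ≤ (k:ℝ) := by
            calc (∑ i, (m i:ℝ)) ≤ ∑ i, (k:ℝ) * w i.succ := Finset.sum_le_sum fun i _ => hfl i
              _ = (k:ℝ) * (1 - w 0) := by rw [← Finset.mul_sum, htail]
              _ ≤ (k:ℝ) * 1 := by nlinarith [hw0 0]
              _ = k := mul_one _
          exact_mod_cast this
      refine ⟨f m, Finset.mem_image_of_mem f hmM, ?_⟩
      have hterm : ∀ i : Fin n, |w i.succ - (m i:ℝ)/k| = w i.succ - (m i:ℝ)/k := by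
        intro i
        rw [abs_of_nonneg]
        rw [sub_nonneg, div_le_iff₀ hkpos]
        linarith [hfl i]
      have htermle : ∀ i : Fin n, w i.succ - (m i:ℝ)/k ≤ 1/k := by
        intro i
        rw [sub_le_iff_le_add, ← add_div, le_div_iff₀ hkpos]
        linarith [hfu i]
      have hsum0 : ∑ i : Fin n, (w i.succ - (m i:ℝ)/k) ≤ n / k := by
        calc ∑ i : Fin n, (w i.succ - (m i:ℝ)/k) ≤ ∑ _i : Fin n, (1/k : ℝ) :=
              Finset.sum_le_sum fun i _ => htermle i
          _ = n / k := by simp [Finset.sum_const]; ring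
      have hsum0nn : 0 ≤ ∑ i : Fin n, (w i.succ - (m i:ℝ)/k) := by
        refine Finset.sum_nonneg fun i _ => ?_
        rw [sub_nonneg, div_le_iff₀ hkpos]; linarith [hfl i]
      rw [Fin.sum_univ_succ]
      have h0 : |w 0 - f m 0| = ∑ i : Fin n, (w i.succ - (m i:ℝ)/k) := by
        rw [hf]
        simp only [Fin.cons_zero]
        have : w 0 - (1 - ∑ i, (m i : ℝ)/k) = -(∑ i : Fin n, (w i.succ - (m i:ℝ)/k)) := by
          rw [Finset.sum_sub_distrib, htail]; ring
        rw [this, abs_neg, abs_of_nonneg hsum0nn]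
      have hrest : ∑ i : Fin n, |w i.succ - f m i.succ| = ∑ i : Fin n, (w i.succ - (m i:ℝ)/k) := by
        refine Finset.sum_congr rfl fun i _ => ?_
        rw [hf]; simp only [Fin.cons_succ]; exact hterm i
      rw [h0, hrest]
      have hfin : 2 * ((n:ℝ) / k) ≤ ε := by
        rw [div_le_iff₀ hε0] at hkge
        rw [← mul_div_assoc, div_le_iff₀ hkpos]
        nlinarith
      linarith
end
end

section
/- For all d, b, k ∈ ℕ and every 0 < ε ≤ 1, the ℓ¹ covering number of the set of rank-at-most-k nonnegatively factored probability tensors satisfies N(T_{d,b}^k, ε) ≤ (4bd/ε)^{bdk} · (4k/ε)^k. -/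
noncomputable section

/-- `ℓ¹` distance between two tensors in `ℝ^{b×⋯×b}` (`d` factors). -/
def tensorDist (d b : ℕ) (T T' : (Fin d → Fin b) → ℝ) : ℝ :=
  ∑ A : Fin d → Fin b, |T A - T' A|

/-- `T_{d,b}^k`: probability tensors that are convex combinations of `k` outer products of
probability vectors. -/
def tensorMV (d b k : ℕ) : Set ((Fin d → Fin b) → ℝ) :=
  { T | ∃ (w : Fin k → ℝ) (p : Fin k → Fin d → Fin b → ℝ),
      (∀ i, 0 ≤ w i) ∧ (∑ i, w i = 1) ∧ (∀ i j, p i j ∈ probSimplex b) ∧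
      T = fun A => ∑ i, w i * ∏ j, p i j (A j) }

lemma sum_pi_prod (d b : ℕ) (h : Fin d → Fin b → ℝ) :
    ∑ A : Fin d → Fin b, ∏ j, h j (A j) = ∏ j, ∑ a, h j a :=
  (Fintype.prod_sum _).symm

lemma sum_pi_fin_succ {d b : ℕ} (F : (Fin (d + 1) → Fin b) → ℝ) :
    ∑ A : Fin (d + 1) → Fin b, F A = ∑ a : Fin b, ∑ A : Fin d → Fin b, F (Fin.cons a A) := by
  rw [← (Equiv.sum_comp (Fin.consEquiv fun _ => Fin b) F), Fintype.sum_prod_type]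
  rfl

lemma tele (b : ℕ) : ∀ (d : ℕ) (f g : Fin d → Fin b → ℝ),
    (∀ j a, 0 ≤ f j a) → (∀ j a, 0 ≤ g j a) →
    (∀ j, ∑ a, f j a ≤ 1) → (∀ j, ∑ a, g j a ≤ 1) →
    ∑ A : Fin d → Fin b, |(∏ j, f j (A j)) - ∏ j, g j (A j)| ≤ ∑ j, ∑ a, |f j a - g j a| := by
  intro d
  induction d with
  | zero => intro f g _ _ _ _; simp
  | succ d ih =>
    intro f g hf0 hg0 hf1 hg1
    have key := sum_pi_fin_succ (b := b)
      (fun A => |(∏ j, f j (A j)) - ∏ j, g j (A j)|)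
    rw [key]
    simp only [Fin.prod_univ_succ, Fin.cons_zero, Fin.cons_succ]
    have hPf : ∀ A : Fin d → Fin b, 0 ≤ ∏ j : Fin d, f (Fin.succ j) (A j) := by
      intro A; exact Finset.prod_nonneg fun j _ => hf0 _ _
    have hsumP : ∑ A : Fin d → Fin b, ∏ j : Fin d, f (Fin.succ j) (A j) ≤ 1 := by
      rw [sum_pi_prod d b (fun j => f (Fin.succ j))]
      exact Finset.prod_le_one (fun j _ => Finset.sum_nonneg fun a _ => hf0 _ _)
        (fun j _ => hf1 _)
    have ihb := ih (fun j => f (Fin.succ j)) (fun j => g (Fin.succ j))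
      (fun j a => hf0 _ _) (fun j a => hg0 _ _) (fun j => hf1 _) (fun j => hg1 _)
    calc ∑ a : Fin b, ∑ A : Fin d → Fin b,
          |f 0 a * (∏ j : Fin d, f (Fin.succ j) (A j))
            - g 0 a * ∏ j : Fin d, g (Fin.succ j) (A j)|
        ≤ ∑ a : Fin b, ∑ A : Fin d → Fin b,
          (|f 0 a - g 0 a| * (∏ j : Fin d, f (Fin.succ j) (A j))
            + g 0 a * |(∏ j : Fin d, f (Fin.succ j) (A j))
              - ∏ j : Fin d, g (Fin.succ j) (A j)|) := by
          apply Finset.sum_le_sum; intro a _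
          apply Finset.sum_le_sum; intro A _
          have : f 0 a * (∏ j : Fin d, f (Fin.succ j) (A j))
              - g 0 a * (∏ j : Fin d, g (Fin.succ j) (A j))
              = (f 0 a - g 0 a) * (∏ j : Fin d, f (Fin.succ j) (A j))
                + g 0 a * ((∏ j : Fin d, f (Fin.succ j) (A j))
                  - ∏ j : Fin d, g (Fin.succ j) (A j)) := by ring
          rw [this]
          refine (abs_add_le _ _).trans ?_
          rw [abs_mul, abs_mul, abs_of_nonneg (hPf A), abs_of_nonneg (hg0 0 a)]
      _ = (∑ a, |f 0 a - g 0 a|) * (∑ A : Fin d → Fin b, ∏ j : Fin d, f (Fin.succ j) (A j))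
            + (∑ a, g 0 a) * (∑ A : Fin d → Fin b,
              |(∏ j : Fin d, f (Fin.succ j) (A j)) - ∏ j : Fin d, g (Fin.succ j) (A j)|) := by
          rw [Finset.sum_mul, Finset.sum_mul, ← Finset.sum_add_distrib]
          congr 1; ext a
          rw [Finset.sum_add_distrib, Finset.mul_sum, Finset.mul_sum]
      _ ≤ (∑ a, |f 0 a - g 0 a|) * 1
            + 1 * (∑ j : Fin d, ∑ a, |f (Fin.succ j) a - g (Fin.succ j) a|) := by
          exact add_le_add
            (mul_le_mul_of_nonneg_left hsumP (Finset.sum_nonneg fun a _ => abs_nonneg _))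
            (mul_le_mul (hg1 0) ihb (Finset.sum_nonneg fun A _ => abs_nonneg _) one_pos.le)
      _ ≤ ∑ j : Fin (d+1), ∑ a, |f j a - g j a| := by
          rw [Fin.sum_univ_succ]; simp

lemma dist_le (d b k : ℕ) (w w' : Fin k → ℝ) (p p' : Fin k → Fin d → Fin b → ℝ)
    (hw' : ∀ i, 0 ≤ w' i)
    (hp0 : ∀ i j a, 0 ≤ p i j a) (hp1 : ∀ i j, ∑ a, p i j a ≤ 1)
    (hp0' : ∀ i j a, 0 ≤ p' i j a) (hp1' : ∀ i j, ∑ a, p' i j a ≤ 1) :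
    ∑ A : Fin d → Fin b, |(∑ i, w i * ∏ j, p i j (A j)) - ∑ i, w' i * ∏ j, p' i j (A j)|
      ≤ ∑ i, |w i - w' i| + ∑ i, w' i * ∑ j, ∑ a, |p i j a - p' i j a| := by
  have hPnn : ∀ i (A : Fin d → Fin b), 0 ≤ ∏ j, p i j (A j) := by
    intro i A; exact Finset.prod_nonneg fun j _ => hp0 _ _ _
  calc ∑ A : Fin d → Fin b, |(∑ i, w i * ∏ j, p i j (A j)) - ∑ i, w' i * ∏ j, p' i j (A j)|
      ≤ ∑ A : Fin d → Fin b, ∑ i, |w i * ∏ j, p i j (A j) - w' i * ∏ j, p' i j (A j)| := by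
        apply Finset.sum_le_sum; intro A _
        rw [← Finset.sum_sub_distrib]
        exact Finset.abs_sum_le_sum_abs _ _
    _ = ∑ i, ∑ A : Fin d → Fin b, |w i * ∏ j, p i j (A j) - w' i * ∏ j, p' i j (A j)| :=
        Finset.sum_comm
    _ ≤ ∑ i, (|w i - w' i| * (∑ A : Fin d → Fin b, ∏ j, p i j (A j))
          + w' i * ∑ A : Fin d → Fin b, |(∏ j, p i j (A j)) - ∏ j, p' i j (A j)|) := by
        apply Finset.sum_le_sum; intro i _
        rw [Finset.mul_sum, Finset.mul_sum, ← Finset.sum_add_distrib]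
        apply Finset.sum_le_sum; intro A _
        have : w i * (∏ j, p i j (A j)) - w' i * (∏ j, p' i j (A j))
            = (w i - w' i) * (∏ j, p i j (A j))
              + w' i * ((∏ j, p i j (A j)) - ∏ j, p' i j (A j)) := by ring
        rw [this]
        refine (abs_add_le _ _).trans ?_
        rw [abs_mul, abs_mul, abs_of_nonneg (hPnn i A), abs_of_nonneg (hw' i)]
    _ ≤ ∑ i, (|w i - w' i| * 1 + w' i * ∑ j, ∑ a, |p i j a - p' i j a|) := by
        apply Finset.sum_le_sum; intro i _
        refine add_le_add (mul_le_mul_of_nonneg_left ?_ (abs_nonneg _))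
          (mul_le_mul_of_nonneg_left ?_ (hw' i))
        · rw [sum_pi_prod d b (fun j => p i j)]
          exact Finset.prod_le_one (fun j _ => Finset.sum_nonneg fun a _ => hp0 _ _ _)
            (fun j _ => hp1 _ _)
        · exact tele b d (p i) (p' i) (hp0 i) (hp0' i) (hp1 i) (hp1' i)
    _ = ∑ i, |w i - w' i| + ∑ i, w' i * ∑ j, ∑ a, |p i j a - p' i j a| := by
        rw [Finset.sum_add_distrib]; simp

lemma round_simplex {b M : ℕ} (hb : 0 < b) (hM : 0 < M) {p : Fin b → ℝ}
    (hp0 : ∀ i, 0 ≤ p i) (hp1 : ∑ i, p i = 1) :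
    ∃ m : Fin b → ℕ, (∀ i, m i ≤ M) ∧ (∑ i, m i = M) ∧
      ∑ i, |p i - (m i : ℝ) / M| ≤ b / M := by
  set f : Fin b → ℕ := fun i => ⌊p i * M⌋₊ with hf
  have hfle : ∀ i, (f i : ℝ) ≤ p i * M := fun i => Nat.floor_le (mul_nonneg (hp0 i) (Nat.cast_nonneg M))
  have hflt : ∀ i, p i * M < f i + 1 := fun i => Nat.lt_floor_add_one _
  have hFM : ∑ i, f i ≤ M := by
    have h1 : ((∑ i, f i : ℕ) : ℝ) ≤ (M : ℝ) := by
      push_cast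
      calc ∑ i, (f i : ℝ) ≤ ∑ i, p i * M := Finset.sum_le_sum fun i _ => hfle i
        _ = (M : ℝ) := by rw [← Finset.sum_mul, hp1, one_mul]
    exact_mod_cast h1
  set r : ℕ := M - ∑ i, f i with hr
  have hrR : (r : ℝ) = (M : ℝ) - ∑ i, (f i : ℝ) := by
    rw [hr]; push_cast [hFM]; ring
  have hrb : r < b := by
    have h2 : (r : ℝ) < b := by
      rw [hrR]
      have : (M : ℝ) = ∑ i, p i * M := by rw [← Finset.sum_mul, hp1, one_mul]
      rw [this, ← Finset.sum_sub_distrib]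
      calc ∑ i, (p i * M - f i) < ∑ _i : Fin b, (1 : ℝ) := by
            apply Finset.sum_lt_sum_of_nonempty
            · exact Finset.univ_nonempty_iff.mpr ⟨⟨0, hb⟩⟩
            · intro i _; linarith [hflt i]
        _ = b := by simp
    exact_mod_cast h2
  have hsumM : ∑ i : Fin b, (f i + if (i : ℕ) < r then 1 else 0) = M := by
    rw [Finset.sum_add_distrib]
    have : ∑ i : Fin b, (if (i : ℕ) < r then 1 else 0) = r := by
      rw [← Finset.card_filter]
      have : Finset.filter (fun i : Fin b => (i : ℕ) < r) Finset.univ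
          = Finset.map (Fin.castLEEmb hrb.le) Finset.univ := by
        ext i
        simp only [Finset.mem_filter, Finset.mem_univ, true_and, Finset.mem_map]
        constructor
        · intro h; exact ⟨⟨(i : ℕ), h⟩, rfl⟩
        · rintro ⟨x, rfl⟩; simp
      rw [this, Finset.card_map, Finset.card_univ, Fintype.card_fin]
    rw [this]
    omega
  refine ⟨fun i => f i + if (i : ℕ) < r then 1 else 0, ?_, hsumM, ?_⟩
  case refine_1 =>
    intro i
    calc f i + (if (i : ℕ) < r then 1 else 0)
        ≤ ∑ i : Fin b, (f i + if (i : ℕ) < r then 1 else 0) :=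
          Finset.single_le_sum (f := fun i : Fin b => f i + if (i : ℕ) < r then 1 else 0)
            (fun i _ => Nat.zero_le _) (Finset.mem_univ i)
      _ = M := hsumM
  case refine_2 =>
    have key : ∀ i, |p i - ((f i + if (i : ℕ) < r then 1 else 0 : ℕ) : ℝ) / M| ≤ 1 / M := by
      intro i
      have hM' : (0:ℝ) < M := by exact_mod_cast hM
      have e : p i - ((f i + if (i : ℕ) < r then 1 else 0 : ℕ) : ℝ) / M
          = (p i * M - ((f i + if (i : ℕ) < r then 1 else 0 : ℕ) : ℝ)) / M := by
        field_simp
      rw [e, abs_div, abs_of_pos hM']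
      apply (div_le_div_iff_of_pos_right hM').mpr
      rw [abs_le]
      by_cases h : (i : ℕ) < r
      · simp only [h, if_true]
        push_cast
        constructor <;> nlinarith [hfle i, hflt i]
      · simp only [h, if_false]
        push_cast
        constructor <;> nlinarith [hfle i, hflt i]
    calc ∑ i, |p i - ((f i + if (i : ℕ) < r then 1 else 0 : ℕ) : ℝ) / M|
        ≤ ∑ _i : Fin b, 1 / (M:ℝ) := Finset.sum_le_sum fun i _ => key i
      _ = b / M := by simp [Finset.sum_const]; ring

/-- Lemma `lrcover`: for `0 < ε ≤ 1`, the set `T_{d,b}^k` admits an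
`ℓ¹` `ε`-cover by at most `(4bd/ε)^{bdk} · (4k/ε)^k` of its own points. -/
theorem tensorMV_covering (d b k : ℕ) (ε : ℝ) (hε0 : 0 < ε) (hε1 : ε ≤ 1) :
    ∃ S : Finset ((Fin d → Fin b) → ℝ),
      ↑S ⊆ tensorMV d b k ∧
      (S.card : ℝ) ≤ (4 * b * d / ε) ^ (b * d * k) * (4 * k / ε) ^ k ∧
      ∀ T ∈ tensorMV d b k, ∃ s ∈ S, tensorDist d b T s ≤ ε := by
  classical
  have hRHS0 : (0:ℝ) ≤ (4 * b * d / ε) ^ (b * d * k) * (4 * k / ε) ^ k := by positivity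
  rcases Nat.eq_zero_or_pos k with hk | hk
  · subst hk
    refine ⟨∅, by simp, by simpa using hRHS0, ?_⟩
    intro T hT
    obtain ⟨w, p, hw0, hw1, hp, hTe⟩ := hT
    exact absurd hw1 (by simp)
  rcases Nat.eq_zero_or_pos d with hd | hd
  · subst hd
    have hk1 : (1:ℝ) ≤ k := by exact_mod_cast hk
    refine ⟨{fun _ => 1}, ?_, ?_, ?_⟩
    · intro s hs
      simp only [Finset.coe_singleton, Set.mem_singleton_iff] at hs
      subst hs
      refine ⟨fun _ => (k:ℝ)⁻¹, fun _ j => j.elim0, fun _ => by positivity, ?_,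
        fun i j => j.elim0, ?_⟩
      · simp [Finset.sum_const, Finset.card_univ]
        rw [mul_inv_cancel₀ (by positivity)]
      · funext A
        simp [Finset.sum_const, Finset.card_univ]
        rw [mul_inv_cancel₀ (by positivity)]
    · have h1 : (1:ℝ) ≤ 4 * k / ε := by
        rw [le_div_iff₀ hε0]; nlinarith
      simp only [Finset.card_singleton, Nat.cast_one, Nat.mul_zero, mul_zero, zero_mul,
        pow_zero, one_mul]
      exact one_le_pow₀ h1
    · intro T hT
      obtain ⟨w, p, hw0, hw1, hp, hTe⟩ := hT
      refine ⟨fun _ => 1, Finset.mem_singleton_self _, ?_⟩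
      have : T = fun _ => (1:ℝ) := by
        rw [hTe]; funext A; simp [hw1]
      rw [this]
      unfold tensorDist
      simp [hε0.le]
  rcases Nat.eq_zero_or_pos b with hb | hb
  · subst hb
    refine ⟨∅, by simp, by simpa using hRHS0, ?_⟩
    intro T hT
    obtain ⟨w, p, hw0, hw1, hp, hTe⟩ := hT
    exact absurd (hp ⟨0, hk⟩ ⟨0, hd⟩).2 (by simp)
  -- main case
  have hb1 : (1:ℝ) ≤ b := by exact_mod_cast hb
  have hd1 : (1:ℝ) ≤ d := by exact_mod_cast hd
  have hk1 : (1:ℝ) ≤ k := by exact_mod_cast hk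
  set M := ⌈2 * b * d / ε⌉₊ with hMdef
  set Mw := ⌈2 * k / ε⌉₊ with hMwdef
  have hbd2 : (2:ℝ) ≤ 2 * b * d / ε := by
    rw [le_div_iff₀ hε0]; nlinarith
  have hk2 : (2:ℝ) ≤ 2 * k / ε := by
    rw [le_div_iff₀ hε0]; nlinarith
  have hMge : (2 * b * d / ε : ℝ) ≤ M := Nat.le_ceil _
  have hMwge : (2 * k / ε : ℝ) ≤ Mw := Nat.le_ceil _
  have hM0 : 0 < M := by
    rw [hMdef, Nat.ceil_pos]; linarith
  have hMw0 : 0 < Mw := by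
    rw [hMwdef, Nat.ceil_pos]; linarith
  have hM0' : (0:ℝ) < M := by exact_mod_cast hM0
  have hMw0' : (0:ℝ) < Mw := by exact_mod_cast hMw0
  have hMle : (M : ℝ) + 1 ≤ 4 * b * d / ε := by
    have h := Nat.ceil_lt_add_one (show (0:ℝ) ≤ 2*b*d/ε by linarith)
    have h2 : (M:ℝ) < 2*b*d/ε + 1 := by rw [hMdef]; exact_mod_cast h
    have h3 : 4 * b * d / ε = 2*b*d/ε + 2*b*d/ε := by ring
    linarith
  have hMwle : (Mw : ℝ) + 1 ≤ 4 * k / ε := by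
    have h := Nat.ceil_lt_add_one (show (0:ℝ) ≤ 2*k/ε by linarith)
    have h2 : (Mw:ℝ) < 2*k/ε + 1 := by rw [hMwdef]; exact_mod_cast h
    have h3 : 4 * k / ε = 2*k/ε + 2*k/ε := by ring
    linarith
  set V : Finset ((Fin k → Fin (Mw+1)) × (Fin k → Fin d → Fin b → Fin (M+1))) :=
    Finset.univ.filter
      (fun x => ((∑ i, ((x.1 i : ℕ))) = Mw ∧ ∀ i j, (∑ a, ((x.2 i j a : ℕ))) = M))
    with hV
  set Φ : ((Fin k → Fin (Mw+1)) × (Fin k → Fin d → Fin b → Fin (M+1))) →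
      ((Fin d → Fin b) → ℝ) := fun x A =>
    ∑ i, ((x.1 i : ℕ) : ℝ) / Mw * ∏ j, ((x.2 i j (A j) : ℕ) : ℝ) / M with hΦ
  refine ⟨Finset.image Φ V, ?_, ?_, ?_⟩
  · intro s hs
    simp only [Finset.coe_image, Set.mem_image, Finset.mem_coe] at hs
    obtain ⟨x, hxV, rfl⟩ := hs
    rw [hV, Finset.mem_filter] at hxV
    obtain ⟨-, hx1, hx2⟩ := hxV
    refine ⟨fun i => ((x.1 i : ℕ) : ℝ) / Mw, fun i j a => ((x.2 i j a : ℕ) : ℝ) / M,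
      fun i => by positivity, ?_, fun i j => ⟨fun a => by positivity, ?_⟩, rfl⟩
    · rw [← Finset.sum_div]
      rw [show (∑ i, ((x.1 i : ℕ) : ℝ)) = ((∑ i, (x.1 i : ℕ) : ℕ) : ℝ) by push_cast; rfl,
        hx1]
      exact div_self hMw0'.ne'
    · rw [← Finset.sum_div]
      rw [show (∑ a, ((x.2 i j a : ℕ) : ℝ)) = ((∑ a, (x.2 i j a : ℕ) : ℕ) : ℝ) by
        push_cast; rfl, hx2 i j]
      exact div_self hM0'.ne'
  · have hcard : (Finset.image Φ V).card ≤ (Mw+1)^k * (M+1)^(b*d*k) := by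
      calc (Finset.image Φ V).card ≤ V.card := Finset.card_image_le
        _ ≤ Fintype.card ((Fin k → Fin (Mw+1)) × (Fin k → Fin d → Fin b → Fin (M+1))) := by
            rw [← Finset.card_univ]; exact Finset.card_filter_le _ _
        _ = (Mw+1)^k * (M+1)^(b*d*k) := by
            simp [Fintype.card_prod, Fintype.card_fun, ← pow_mul]
    calc ((Finset.image Φ V).card : ℝ)
        ≤ (((Mw+1)^k * (M+1)^(b*d*k) : ℕ) : ℝ) := by exact_mod_cast hcard
      _ = ((M:ℝ)+1)^(b*d*k) * ((Mw:ℝ)+1)^k := by push_cast; ring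
      _ ≤ (4 * b * d / ε) ^ (b * d * k) * (4 * k / ε) ^ k := by
          exact mul_le_mul (pow_le_pow_left₀ (by positivity) hMle _)
            (pow_le_pow_left₀ (by positivity) hMwle _) (by positivity) (by positivity)
  · intro T hT
    obtain ⟨w, p, hw0, hw1, hp, rfl⟩ := hT
    obtain ⟨mw, hmwle, hmwsum, hmwerr⟩ := round_simplex hk hMw0 hw0 hw1
    choose q hqle hqsum hqerr using fun i j => round_simplex hb hM0 (hp i j).1 (hp i j).2
    set x : (Fin k → Fin (Mw+1)) × (Fin k → Fin d → Fin b → Fin (M+1)) :=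
      (fun i => ⟨mw i, Nat.lt_succ_of_le (hmwle i)⟩,
       fun i j a => ⟨q i j a, Nat.lt_succ_of_le (hqle i j a)⟩) with hx
    have hxV : x ∈ V := by
      rw [hV, Finset.mem_filter]
      exact ⟨Finset.mem_univ _, hmwsum, hqsum⟩
    refine ⟨Φ x, Finset.mem_image_of_mem Φ hxV, ?_⟩
    have hw'sum : ∑ i, ((mw i : ℕ) : ℝ) / Mw = 1 := by
      rw [← Finset.sum_div,
        show (∑ i, ((mw i : ℕ) : ℝ)) = ((∑ i, mw i : ℕ) : ℝ) by push_cast; rfl, hmwsum]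
      exact div_self hMw0'.ne'
    have hq'sum : ∀ i j, ∑ a, ((q i j a : ℕ) : ℝ) / M = 1 := by
      intro i j
      rw [← Finset.sum_div,
        show (∑ a, ((q i j a : ℕ) : ℝ)) = ((∑ a, q i j a : ℕ) : ℝ) by push_cast; rfl,
        hqsum i j]
      exact div_self hM0'.ne'
    have hbound := dist_le d b k w (fun i => ((mw i : ℕ) : ℝ) / Mw) p
      (fun i j a => ((q i j a : ℕ) : ℝ) / M)
      (fun i => by positivity)
      (fun i j a => (hp i j).1 a) (fun i j => le_of_eq (hp i j).2)
      (fun i j a => by positivity) (fun i j => le_of_eq (hq'sum i j))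
    have herr1 : ∑ i, |w i - ((mw i : ℕ) : ℝ) / Mw| ≤ ε / 2 := by
      refine hmwerr.trans ?_
      rw [div_le_div_iff₀ hMw0' two_pos]
      have := (div_le_iff₀ hε0).mp hMwge
      linarith
    have herr2 : ∀ i j, ∑ a, |p i j a - ((q i j a : ℕ) : ℝ) / M| ≤ ε / (2 * d) := by
      intro i j
      refine (hqerr i j).trans ?_
      rw [div_le_div_iff₀ hM0' (by positivity)]
      have := (div_le_iff₀ hε0).mp hMge
      nlinarith
    have herr3 : ∑ i, ((mw i : ℕ) : ℝ) / Mw * ∑ j, ∑ a, |p i j a - ((q i j a : ℕ) : ℝ) / M|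
        ≤ ε / 2 := by
      calc ∑ i, ((mw i : ℕ) : ℝ) / Mw * ∑ j, ∑ a, |p i j a - ((q i j a : ℕ) : ℝ) / M|
          ≤ ∑ i, ((mw i : ℕ) : ℝ) / Mw * (ε / 2) := by
            apply Finset.sum_le_sum
            intro i _
            apply mul_le_mul_of_nonneg_left ?_ (by positivity)
            calc ∑ j, ∑ a, |p i j a - ((q i j a : ℕ) : ℝ) / M|
                ≤ ∑ _j : Fin d, ε / (2 * d) := Finset.sum_le_sum fun j _ => herr2 i j
              _ = d * (ε / (2 * d)) := by simp [Finset.sum_const]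
              _ = ε / 2 := by field_simp
        _ = ε / 2 := by rw [← Finset.sum_mul, hw'sum, one_mul]
    have hΦx : Φ x = fun A => ∑ i, ((mw i : ℕ) : ℝ) / Mw * ∏ j, ((q i j (A j) : ℕ) : ℝ) / M := rfl
    unfold tensorDist
    rw [hΦx]
    calc ∑ A : Fin d → Fin b,
          |(∑ i, w i * ∏ j, p i j (A j))
            - ∑ i, ((mw i : ℕ) : ℝ) / Mw * ∏ j, ((q i j (A j) : ℕ) : ℝ) / M|
        ≤ (∑ i, |w i - ((mw i : ℕ) : ℝ) / Mw|)
            + ∑ i, ((mw i : ℕ) : ℝ) / Mw * ∑ j, ∑ a, |p i j a - ((q i j a : ℕ) : ℝ) / M| :=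
          hbound
      _ ≤ ε / 2 + ε / 2 := add_le_add herr1 herr3
      _ = ε := by ring
end
end

section
/- For all d, b, k ∈ ℕ and every 0 < ε ≤ 1, the ℓ¹ covering number of the set of nonnegative-Tucker-factored probability tensors satisfies N(T̃_{d,b}^k, ε) ≤ (4bd/ε)^{bdk} · (4k^d/ε)^{k^d}. -/
noncomputable section

/-- `T̃_{d,b}^k`: probability tensors with a nonnegative Tucker factorization of core size
`k` per dimension. -/
def tensorTucker (d b k : ℕ) : Set ((Fin d → Fin b) → ℝ) :=
  { T | ∃ (W : (Fin d → Fin k) → ℝ) (p : Fin d → Fin k → Fin b → ℝ),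
      (∀ S, 0 ≤ W S) ∧ (∑ S, W S = 1) ∧ (∀ i j, p i j ∈ probSimplex b) ∧
      T = fun A => ∑ S : Fin d → Fin k, W S * ∏ i, p i (S i) (A i) }

open Finset

private lemma teleFin : ∀ (d : ℕ) (x y : Fin d → ℝ), (∀ i, 0 ≤ x i) → (∀ i, 0 ≤ y i) →
    |∏ i, x i - ∏ i, y i| ≤
      ∑ i, ∏ j, (if j < i then y j else if i < j then x j else |x i - y i|) := by
  intro d
  induction d with
  | zero => intro x y _ _; simp
  | succ d ih =>
    intro x y hx hy
    rw [Fin.prod_univ_castSucc, Fin.prod_univ_castSucc, Fin.sum_univ_castSucc]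
    set X := ∏ i : Fin d, x i.castSucc with hX
    set Y := ∏ i : Fin d, y i.castSucc with hY
    have hXY : |X - Y| ≤ ∑ i : Fin d, ∏ j : Fin d,
        (if j < i then y j.castSucc else if i < j then x j.castSucc
          else |x i.castSucc - y i.castSucc|) :=
      ih (fun i => x i.castSucc) (fun i => y i.castSucc) (fun i => hx _) (fun i => hy _)
    have hxl : 0 ≤ x (Fin.last d) := hx _
    have hY0 : 0 ≤ Y := prod_nonneg fun i _ => hy _
    have key : |X * x (Fin.last d) - Y * y (Fin.last d)| ≤
        |X - Y| * x (Fin.last d) + Y * |x (Fin.last d) - y (Fin.last d)| := by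
      have : X * x (Fin.last d) - Y * y (Fin.last d)
          = (X - Y) * x (Fin.last d) + Y * (x (Fin.last d) - y (Fin.last d)) := by ring
      rw [this]
      calc |(X - Y) * x (Fin.last d) + Y * (x (Fin.last d) - y (Fin.last d))|
          ≤ |(X - Y) * x (Fin.last d)| + |Y * (x (Fin.last d) - y (Fin.last d))| := abs_add_le _ _
        _ = |X - Y| * x (Fin.last d) + Y * |x (Fin.last d) - y (Fin.last d)| := by
            rw [abs_mul, abs_mul, abs_of_nonneg hxl, abs_of_nonneg hY0]
    refine key.trans ?_
    have e1 : ∀ i : Fin d, (∏ j : Fin (d+1),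
        (if j < i.castSucc then y j else if i.castSucc < j then x j
          else |x i.castSucc - y i.castSucc|))
        = (∏ j : Fin d, (if j < i then y j.castSucc else if i < j then x j.castSucc
            else |x i.castSucc - y i.castSucc|)) * x (Fin.last d) := by
      intro i
      rw [Fin.prod_univ_castSucc]
      have h2 : (if Fin.last d < i.castSucc then y (Fin.last d)
          else if i.castSucc < Fin.last d then x (Fin.last d)
          else |x i.castSucc - y i.castSucc|) = x (Fin.last d) := by
        rw [if_neg (Fin.castSucc_lt_last i).asymm, if_pos (Fin.castSucc_lt_last i)]
      rw [h2]
      exact congrArg (· * x (Fin.last d)) (prod_congr rfl fun j _ => by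
        simp [Fin.castSucc_lt_castSucc_iff])
    have e2 : (∏ j : Fin (d+1),
        (if j < Fin.last d then y j else if Fin.last d < j then x j
          else |x (Fin.last d) - y (Fin.last d)|))
        = Y * |x (Fin.last d) - y (Fin.last d)| := by
      rw [Fin.prod_univ_castSucc]
      have h2 : (if Fin.last d < Fin.last d then y (Fin.last d)
          else if Fin.last d < Fin.last d then x (Fin.last d)
          else |x (Fin.last d) - y (Fin.last d)|) = |x (Fin.last d) - y (Fin.last d)| := by
        simp
      rw [h2]
      exact congrArg (· * |x (Fin.last d) - y (Fin.last d)|)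
        (prod_congr rfl fun j _ => by simp [Fin.castSucc_lt_last])
    rw [e2]
    simp only [e1]
    rw [← sum_mul]
    have := mul_le_mul_of_nonneg_right hXY hxl
    linarith

private lemma tensorFactorDist (d b : ℕ) (q q' : Fin d → Fin b → ℝ) (δ : ℝ) (hδ : 0 ≤ δ)
    (hq : ∀ i a, 0 ≤ q i a) (hq1 : ∀ i, ∑ a, q i a = 1)
    (hq' : ∀ i a, 0 ≤ q' i a) (hq1' : ∀ i, ∑ a, q' i a = 1)
    (hdist : ∀ i, ∑ a, |q i a - q' i a| ≤ δ) :
    ∑ A : Fin d → Fin b, |∏ i, q i (A i) - ∏ i, q' i (A i)| ≤ d * δ := by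
  classical
  set F : Fin d → Fin d → Fin b → ℝ := fun i j =>
    if j < i then q' j else if i < j then q j else fun a => |q i a - q' i a| with hF
  have h1 : ∀ A : Fin d → Fin b, |∏ i, q i (A i) - ∏ i, q' i (A i)| ≤
      ∑ i, ∏ j, F i j (A j) := by
    intro A
    refine le_of_le_of_eq (teleFin d (fun i => q i (A i)) (fun i => q' i (A i))
      (fun i => hq i (A i)) (fun i => hq' i (A i))) ?_
    refine Finset.sum_congr rfl fun i _ => Finset.prod_congr rfl fun j _ => ?_
    rcases lt_trichotomy j i with h | h | h
    · simp [hF, h]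
    · subst h; simp [hF]
    · simp [hF, asymm h, h]
  calc ∑ A : Fin d → Fin b, |∏ i, q i (A i) - ∏ i, q' i (A i)|
      ≤ ∑ A : Fin d → Fin b, ∑ i, ∏ j, F i j (A j) := Finset.sum_le_sum fun A _ => h1 A
    _ = ∑ i, ∑ A : Fin d → Fin b, ∏ j, F i j (A j) := Finset.sum_comm
    _ = ∑ i, ∏ j, ∑ a, F i j a :=
        Finset.sum_congr rfl fun i _ => (Fintype.prod_sum fun j a => F i j a).symm
    _ ≤ ∑ _i : Fin d, δ := by
        refine Finset.sum_le_sum fun i _ => ?_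
        have : ∏ j, ∑ a, F i j a = ∑ a, |q i a - q' i a| := by
          refine Finset.prod_eq_single_of_mem i (Finset.mem_univ i) ?_ |>.trans ?_
          · intro j _ hji
            rcases lt_or_gt_of_ne hji with h | h
            · simp only [hF, if_pos h]; exact hq1' j
            · simp only [hF, if_neg (asymm h), if_pos h]; exact hq1 j
          · simp [hF]
        rw [this]; exact hdist i
    _ = d * δ := by simp [mul_comm]

private lemma simplexCoverFin2 (m : ℕ) (hm : 2 ≤ m) (δ : ℝ) (hδ0 : 0 < δ) (hδ1 : δ ≤ 1) :
    ∃ S : Finset (Fin m → ℝ),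
      (∀ s ∈ S, (∀ i, 0 ≤ s i) ∧ ∑ i, s i = 1) ∧
      (S.card : ℝ) ≤ (2 * m / δ) ^ m ∧
      ∀ w : Fin m → ℝ, (∀ i, 0 ≤ w i) → (∑ i, w i = 1) →
        ∃ s ∈ S, ∑ i, |w i - s i| ≤ δ := by
  classical
  have hm0 : 0 < m := by omega
  have hmR : (2:ℝ) ≤ m := by exact_mod_cast hm
  have hx2 : (2:ℝ) ≤ (m:ℝ) / δ := le_trans hmR (by
    rw [le_div_iff₀ hδ0]; nlinarith)
  set n : ℕ := ⌈(m:ℝ) / δ⌉₊ with hn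
  have hxn : (m:ℝ) / δ ≤ n := Nat.le_ceil _
  have hn0 : 0 < n := by
    have : (0:ℝ) < n := lt_of_lt_of_le (by linarith) hxn
    exact_mod_cast this
  have hnR0 : (0:ℝ) < n := by exact_mod_cast hn0
  have hnub : (n:ℝ) + 1 ≤ 2 * m / δ := by
    have h1 : (n:ℝ) < (m:ℝ)/δ + 1 := Nat.ceil_lt_add_one (by positivity)
    have : 2 * (m:ℝ) / δ = (m:ℝ)/δ + (m:ℝ)/δ := by ring
    rw [this]
    linarith
  set F : (Fin m → Fin (n+1)) → (Fin m → ℝ) := fun c =>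
    if (∑ i, (c i : ℕ)) = n then (fun i => ((c i : ℕ) : ℝ) / n) else (fun _ => (m:ℝ)⁻¹)
    with hF
  refine ⟨Finset.image F Finset.univ, ?_, ?_, ?_⟩
  · intro s hs
    simp only [Finset.mem_image] at hs
    obtain ⟨c, -, rfl⟩ := hs
    by_cases hc : (∑ i, (c i : ℕ)) = n
    · rw [hF]
      simp only [if_pos hc]
      constructor
      · intro i; positivity
      · rw [← Finset.sum_div]
        rw [div_eq_one_iff_eq (ne_of_gt hnR0)]
        exact_mod_cast hc
    · rw [hF]
      simp only [if_neg hc]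
      constructor
      · intro i
        have : (0:ℝ) < m := by exact_mod_cast hm0
        positivity
      · simp [Finset.sum_const]
        rw [mul_inv_cancel₀]
        exact_mod_cast hm0.ne'
  · calc ((Finset.image F Finset.univ).card : ℝ)
        ≤ ((Finset.univ : Finset (Fin m → Fin (n+1))).card : ℝ) := by
          exact_mod_cast Finset.card_image_le
      _ = ((n+1 : ℕ) : ℝ) ^ m := by
          rw [Finset.card_univ]
          simp [Fintype.card_fun]
      _ ≤ (2 * m / δ) ^ m := by
          apply pow_le_pow_left₀ (by positivity)
          push_cast
          exact hnub
  · intro w hw0 hw1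
    -- cumulative rounding
    set w' : ℕ → ℝ := fun t => if h : t < m then w ⟨t, h⟩ else 0 with hw'
    have hw'0 : ∀ t, 0 ≤ w' t := by
      intro t; rw [hw']; dsimp only; split
      · exact hw0 _
      · exact le_rfl
    set s' : ℕ → ℝ := fun t => ∑ i ∈ Finset.range t, w' i with hs'
    have hs'nonneg : ∀ t, 0 ≤ s' t := fun t => Finset.sum_nonneg fun i _ => hw'0 i
    have hs'mono : Monotone s' := by
      intro a b hab
      exact Finset.sum_le_sum_of_subset_of_nonneg (Finset.range_subset_range.2 hab)
        (fun i _ _ => hw'0 i)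
    have hs'm : s' m = 1 := by
      rw [hs']
      dsimp only
      rw [← hw1, Finset.sum_range]
      refine Finset.sum_congr rfl fun i _ => ?_
      rw [hw']
      simp [i.isLt]
    set c : ℕ → ℤ := fun t => ⌊(n:ℝ) * s' t⌋ with hc
    have hc0 : c 0 = 0 := by simp [hc, hs']
    have hcm : c m = n := by simp [hc, hs'm]
    have hcmono : Monotone c := fun a b hab =>
      Int.floor_mono (mul_le_mul_of_nonneg_left (hs'mono hab) hnR0.le)
    have hcnonneg : ∀ t, 0 ≤ c t := fun t =>
      Int.floor_nonneg.2 (mul_nonneg hnR0.le (hs'nonneg t))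
    have hcub : ∀ t, t ≤ m → c t ≤ n := fun t ht => hcm ▸ hcmono ht
    have hDlt : ∀ i : Fin m, (c (i+1) - c i).toNat < n + 1 := by
      intro i
      have h1 : c (i+1) - c i ≤ n := by
        have := hcub (i+1) i.isLt
        have := hcnonneg i
        omega
      omega
    set D : Fin m → Fin (n+1) := fun i => ⟨(c (i+1) - c i).toNat, hDlt i⟩ with hD
    have hDval : ∀ i : Fin m, ((D i : ℕ) : ℤ) = c (i+1) - c i := by
      intro i
      rw [hD]
      simp only
      exact Int.toNat_of_nonneg (sub_nonneg.2 (hcmono (Nat.le_succ i)))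
    have hDsum : (∑ i, (D i : ℕ)) = n := by
      have hz : ((∑ i, (D i : ℕ) : ℕ) : ℤ) = n := by
        push_cast [hDval]
        rw [← Finset.sum_range (f := fun t => c (t+1) - c t),
          Finset.sum_range_sub, hc0, hcm]
        ring
      exact_mod_cast hz
    refine ⟨F D, Finset.mem_image_of_mem F (Finset.mem_univ D), ?_⟩
    have hFD : F D = fun i => ((D i : ℕ) : ℝ) / n := by
      rw [hF]; simp only [hDsum, if_pos]
    rw [hFD]
    have hterm : ∀ i : Fin m, |w i - ((D i : ℕ) : ℝ) / n| ≤ 1 / n := by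
      intro i
      have hwi : w i = s' (i+1) - s' i := by
        rw [hs']
        dsimp only
        rw [Finset.sum_range_succ]
        have : w' i = w i := by rw [hw']; simp [i.isLt]
        rw [this]; ring
      have hDiR : ((D i : ℕ) : ℝ) = ((c (i+1) : ℤ) : ℝ) - ((c i : ℤ) : ℝ) := by
        rw [← Int.cast_sub]
        exact_mod_cast congrArg (fun z : ℤ => (z : ℝ)) (hDval i)
      have hfloor : ∀ t, 0 ≤ (n:ℝ) * s' t - c t ∧ (n:ℝ) * s' t - c t < 1 := by
        intro t
        constructor
        · exact sub_nonneg.2 (Int.floor_le _)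
        · have := Int.sub_one_lt_floor ((n:ℝ) * s' t)
          have hcc : (c t : ℝ) = (⌊(n:ℝ) * s' t⌋ : ℝ) := by rw [hc]
          rw [hcc]; linarith
      obtain ⟨ha0, ha1⟩ := hfloor (i+1)
      obtain ⟨hb0, hb1⟩ := hfloor i
      have heq : w i - ((D i : ℕ) : ℝ) / n =
          (((n:ℝ) * s' (i+1) - c (i+1)) - ((n:ℝ) * s' i - c i)) / n := by
        rw [hwi, hDiR]
        field_simp
        ring
      rw [heq, abs_div, abs_of_pos hnR0]
      gcongr
      rw [abs_le]
      constructor <;> linarith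
    calc ∑ i, |w i - ((D i : ℕ) : ℝ) / n| ≤ ∑ _i : Fin m, 1 / (n:ℝ) :=
          Finset.sum_le_sum fun i _ => hterm i
      _ = (m : ℝ) / n := by
          rw [Finset.sum_const]
          simp
          ring
      _ ≤ δ := by
          rw [div_le_iff₀ hnR0]
          rw [div_le_iff₀ hδ0] at hxn
          linarith

private lemma simplexCoverFin (m : ℕ) (δ : ℝ) (hδ0 : 0 < δ) (hδ1 : δ ≤ 1) :
    ∃ S : Finset (Fin m → ℝ),
      (∀ s ∈ S, (∀ i, 0 ≤ s i) ∧ ∑ i, s i = 1) ∧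
      (S.card : ℝ) ≤ (2 * m / δ) ^ m ∧
      ∀ w : Fin m → ℝ, (∀ i, 0 ≤ w i) → (∑ i, w i = 1) →
        ∃ s ∈ S, ∑ i, |w i - s i| ≤ δ := by
  classical
  match m with
  | 0 =>
    refine ⟨∅, by simp, by simp, ?_⟩
    intro w _ hw1
    simp at hw1
  | 1 =>
    refine ⟨{fun _ => (1:ℝ)}, ?_, ?_, ?_⟩
    · intro s hs
      simp at hs
      subst hs
      exact ⟨fun _ => by norm_num, by simp⟩
    · have h2 : (1:ℝ) ≤ 2 / δ := by
        rw [le_div_iff₀ hδ0]; linarith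
      calc ((Finset.card {fun _ => (1:ℝ)} : ℕ) : ℝ) = 1 := by simp
        _ ≤ 2 / δ := h2
        _ = (2 * (1:ℕ) / δ) ^ 1 := by norm_num
    · intro w hw0 hw1
      refine ⟨fun _ => (1:ℝ), by simp, ?_⟩
      have hw : w 0 = 1 := by simpa using hw1
      have hall : ∀ i : Fin 1, w i = 1 := fun i => by rw [Fin.eq_zero i]; exact hw
      simp [hall]
      linarith
  | (n + 2) =>
    exact simplexCoverFin2 (n+2) (by omega) δ hδ0 hδ1

private lemma simplexCoverType (ι : Type) [Fintype ι] [DecidableEq ι] (δ : ℝ)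
    (hδ0 : 0 < δ) (hδ1 : δ ≤ 1) :
    ∃ S : Finset (ι → ℝ),
      (∀ s ∈ S, (∀ i, 0 ≤ s i) ∧ ∑ i, s i = 1) ∧
      (S.card : ℝ) ≤ (2 * Fintype.card ι / δ) ^ Fintype.card ι ∧
      ∀ w : ι → ℝ, (∀ i, 0 ≤ w i) → (∑ i, w i = 1) →
        ∃ s ∈ S, ∑ i, |w i - s i| ≤ δ := by
  classical
  obtain ⟨S, hS1, hS2, hS3⟩ := simplexCoverFin (Fintype.card ι) δ hδ0 hδ1
  set e := Fintype.equivFin ι with he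
  refine ⟨S.image (fun s => s ∘ e), ?_, ?_, ?_⟩
  · intro s hs
    simp only [Finset.mem_image] at hs
    obtain ⟨t, ht, rfl⟩ := hs
    obtain ⟨ht1, ht2⟩ := hS1 t ht
    refine ⟨fun i => ht1 (e i), ?_⟩
    simpa using (Equiv.sum_comp e t).trans ht2
  · refine le_trans ?_ hS2
    exact_mod_cast Finset.card_image_le
  · intro w hw0 hw1
    obtain ⟨s, hs, hd⟩ := hS3 (w ∘ e.symm) (fun j => hw0 _)
      (by simp only [Function.comp]
          rw [show ∑ x, w (e.symm x) = ∑ i, w i from Equiv.sum_comp e.symm w]; exact hw1)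
    refine ⟨s ∘ e, Finset.mem_image_of_mem _ hs, ?_⟩
    have h2 : ∑ i, |w i - (s ∘ e) i| = ∑ j, |w (e.symm j) - s (e (e.symm j))| :=
      (Equiv.sum_comp e.symm (fun i => |w i - (s ∘ e) i|)).symm
    rw [h2]
    refine le_trans (le_of_eq (Finset.sum_congr rfl fun j _ => ?_)) hd
    simp

private lemma sumProdOne (d b : ℕ) (q : Fin d → Fin b → ℝ) (hq : ∀ i, ∑ a, q i a = 1) :
    ∑ A : Fin d → Fin b, ∏ i, q i (A i) = 1 := by
  classical
  rw [← Fintype.prod_sum fun i a => q i a]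
  simp [hq]

/-- Lemma `tuckcover`: for `0 < ε ≤ 1`, the set `T̃_{d,b}^k` admits an
`ℓ¹` `ε`-cover by at most `(4bd/ε)^{bdk} · (4k^d/ε)^{k^d}` of its own points. -/
theorem tensorTucker_covering (d b k : ℕ) (ε : ℝ) (hε0 : 0 < ε) (hε1 : ε ≤ 1) :
    ∃ S : Finset ((Fin d → Fin b) → ℝ),
      ↑S ⊆ tensorTucker d b k ∧
      (S.card : ℝ) ≤ (4 * b * d / ε) ^ (b * d * k) * (4 * (k : ℝ) ^ d / ε) ^ (k ^ d) ∧
      ∀ T ∈ tensorTucker d b k, ∃ s ∈ S, tensorDist d b T s ≤ ε := by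
  classical
  rcases Nat.eq_zero_or_pos d with hd | hd
  · subst hd
    refine ⟨{fun _ => (1:ℝ)}, ?_, ?_, ?_⟩
    · intro T hT
      simp only [Finset.coe_singleton, Set.mem_singleton_iff] at hT
      subst hT
      refine ⟨fun _ => 1, fun i => i.elim0, fun _ => zero_le_one, by simp, fun i => i.elim0, ?_⟩
      funext A
      simp
    · have hb : (1:ℝ) ≤ (4 * (k:ℝ) ^ 0 / ε) ^ (k ^ 0) := by
        simp only [pow_zero, pow_one]
        rw [le_div_iff₀ hε0]
        linarith
      calc ((Finset.card {fun _ => (1:ℝ)} : ℕ) : ℝ) = 1 := by simp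
        _ ≤ _ := by
          rw [show b * 0 * k = 0 by ring, pow_zero, one_mul]
          exact hb
    · intro T hT
      obtain ⟨W, p, hW0, hW1, hp, rfl⟩ := hT
      refine ⟨fun _ => 1, Finset.mem_singleton_self _, ?_⟩
      have hWd : W default = 1 := by simpa using hW1
      simp [tensorDist, hWd]
      linarith
  rcases Nat.eq_zero_or_pos k with hk | hk
  · subst hk
    refine ⟨∅, by simp, by simp; positivity, ?_⟩
    intro T hT
    obtain ⟨W, p, hW0, hW1, hp, rfl⟩ := hT
    exfalso
    have : IsEmpty (Fin d → Fin 0) := by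
      refine ⟨fun f => (f ⟨0, hd⟩).elim0⟩
    rw [Finset.univ_eq_empty, Finset.sum_empty] at hW1
    norm_num at hW1
  rcases Nat.eq_zero_or_pos b with hb | hb
  · subst hb
    refine ⟨∅, by simp, by simp; positivity, ?_⟩
    intro T hT
    obtain ⟨W, p, hW0, hW1, hp, rfl⟩ := hT
    exfalso
    have := (hp ⟨0, hd⟩ ⟨0, hk⟩).2
    simp at this
  -- main case
  have hdR : (1:ℝ) ≤ d := by exact_mod_cast hd
  have hkR : (1:ℝ) ≤ k := by exact_mod_cast hk
  have hbR : (1:ℝ) ≤ b := by exact_mod_cast hb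
  set δp := ε / (2 * d) with hδp
  set δW := ε / 2 with hδW
  have hδp0 : 0 < δp := by positivity
  have hδp1 : δp ≤ 1 := by
    rw [hδp, div_le_one (by positivity)]
    linarith
  have hδW0 : 0 < δW := by positivity
  have hδW1 : δW ≤ 1 := by rw [hδW]; linarith
  obtain ⟨SW, hSW1, hSW2, hSW3⟩ := simplexCoverType (Fin d → Fin k) δW hδW0 hδW1
  obtain ⟨Sp, hSp1, hSp2, hSp3⟩ := simplexCoverFin b δp hδp0 hδp1
  have hcard : Fintype.card (Fin d → Fin k) = k ^ d := by
    simp [Fintype.card_fun]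
  set P : Finset (Fin d → Fin k → Fin b → ℝ) :=
    Fintype.piFinset (fun _ => Fintype.piFinset (fun _ => Sp)) with hP
  set Φ : (((Fin d → Fin k) → ℝ) × (Fin d → Fin k → Fin b → ℝ)) → ((Fin d → Fin b) → ℝ) :=
    fun x => fun A => ∑ S : Fin d → Fin k, x.1 S * ∏ i, x.2 i (S i) (A i) with hΦ
  refine ⟨(SW ×ˢ P).image Φ, ?_, ?_, ?_⟩
  · intro T hT
    simp only [Finset.coe_image, Set.mem_image, Finset.mem_coe, Finset.mem_product] at hT
    obtain ⟨⟨W, p⟩, ⟨hW, hp⟩, rfl⟩ := hT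
    have hpm : ∀ i j, p i j ∈ Sp := by
      intro i j
      have := Fintype.mem_piFinset.1 hp i
      exact Fintype.mem_piFinset.1 this j
    exact ⟨W, p, (hSW1 W hW).1, (hSW1 W hW).2,
      fun i j => ⟨(hSp1 _ (hpm i j)).1, (hSp1 _ (hpm i j)).2⟩, rfl⟩
  · have hSpb : (Sp.card : ℝ) ≤ (4 * b * d / ε) ^ b := by
      have he : 2 * (b:ℝ) / δp = 4 * b * d / ε := by
        rw [hδp]
        field_simp
        ring
      rw [← he]
      exact hSp2
    have hPcn : P.card = Sp.card ^ (d * k) := by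
      rw [hP, Fintype.card_piFinset]
      simp only [Fintype.card_piFinset, Finset.prod_const, Finset.card_univ,
        Fintype.card_fin]
      rw [← pow_mul, Nat.mul_comm]
    have hPcard : (P.card : ℝ) ≤ ((4 * b * d / ε) ^ b) ^ (d * k) := by
      rw [hPcn]
      push_cast
      exact pow_le_pow_left₀ (by positivity) hSpb _
    have hSWb : (SW.card : ℝ) ≤ (4 * (k:ℝ) ^ d / ε) ^ (k ^ d) := by
      have he : 2 * ((Fintype.card (Fin d → Fin k) : ℕ) : ℝ) / δW = 4 * (k:ℝ) ^ d / ε := by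
        rw [hcard, hδW]
        push_cast
        field_simp
        ring
      rw [← he, ← hcard]
      exact hSW2
    calc (((SW ×ˢ P).image Φ).card : ℝ) ≤ ((SW ×ˢ P).card : ℝ) := by
          exact_mod_cast Finset.card_image_le
      _ = (SW.card : ℝ) * (P.card : ℝ) := by
          rw [Finset.card_product]; push_cast; ring
      _ ≤ (4 * (k:ℝ) ^ d / ε) ^ (k ^ d) * ((4 * b * d / ε) ^ b) ^ (d * k) := by
          apply mul_le_mul hSWb hPcard (by positivity) (by positivity)
      _ = (4 * b * d / ε) ^ (b * d * k) * (4 * (k : ℝ) ^ d / ε) ^ (k ^ d) := by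
          rw [← pow_mul, mul_comm]
          ring_nf
  · intro T hT
    obtain ⟨W, p, hW0, hW1, hp, rfl⟩ := hT
    obtain ⟨W', hW'm, hW'd⟩ := hSW3 W hW0 hW1
    have hex : ∀ i j, ∃ s ∈ Sp, ∑ a, |p i j a - s a| ≤ δp :=
      fun i j => hSp3 (p i j) (hp i j).1 (hp i j).2
    choose p' hp'm hp'd using hex
    have hW'props := hSW1 W' hW'm
    have hp'props : ∀ i j, (∀ a, 0 ≤ p' i j a) ∧ ∑ a, p' i j a = 1 :=
      fun i j => hSp1 _ (hp'm i j)
    refine ⟨Φ (W', p'), Finset.mem_image_of_mem Φ (Finset.mem_product.2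
      ⟨hW'm, Fintype.mem_piFinset.2 fun i => Fintype.mem_piFinset.2 fun j => hp'm i j⟩), ?_⟩
    have hprod_nonneg : ∀ (S : Fin d → Fin k) (A : Fin d → Fin b),
        0 ≤ ∏ i, p i (S i) (A i) :=
      fun S A => Finset.prod_nonneg fun i _ => (hp i (S i)).1 _
    have pointwise : ∀ A : Fin d → Fin b,
        |(∑ S : Fin d → Fin k, W S * ∏ i, p i (S i) (A i)) - Φ (W', p') A| ≤
        ∑ S : Fin d → Fin k, (|W S - W' S| * ∏ i, p i (S i) (A i)
          + W' S * |(∏ i, p i (S i) (A i)) - ∏ i, p' i (S i) (A i)|) := by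
      intro A
      rw [hΦ]
      dsimp only
      rw [← Finset.sum_sub_distrib]
      refine (Finset.abs_sum_le_sum_abs _ _).trans (Finset.sum_le_sum fun S _ => ?_)
      have expand : W S * ∏ i, p i (S i) (A i) - W' S * ∏ i, p' i (S i) (A i)
          = (W S - W' S) * ∏ i, p i (S i) (A i)
            + W' S * ((∏ i, p i (S i) (A i)) - ∏ i, p' i (S i) (A i)) := by ring
      rw [expand]
      refine (abs_add_le _ _).trans (le_of_eq ?_)
      rw [abs_mul, abs_mul, abs_of_nonneg (hprod_nonneg S A), abs_of_nonneg (hW'props.1 S)]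
    have hfact : ∀ S : Fin d → Fin k,
        ∑ A : Fin d → Fin b, |(∏ i, p i (S i) (A i)) - ∏ i, p' i (S i) (A i)| ≤ d * δp := by
      intro S
      exact tensorFactorDist d b (fun i => p i (S i)) (fun i => p' i (S i)) δp hδp0.le
        (fun i a => (hp i (S i)).1 a) (fun i => (hp i (S i)).2)
        (fun i a => (hp'props i (S i)).1 a) (fun i => (hp'props i (S i)).2)
        (fun i => hp'd i (S i))
    have hone : ∀ S : Fin d → Fin k,
        ∑ A : Fin d → Fin b, ∏ i, p i (S i) (A i) = 1 :=
      fun S => sumProdOne d b (fun i => p i (S i)) (fun i => (hp i (S i)).2)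
    have main : tensorDist d b (fun A => ∑ S : Fin d → Fin k, W S * ∏ i, p i (S i) (A i))
        (Φ (W', p')) ≤ δW + d * δp := by
      unfold tensorDist
      calc ∑ A : Fin d → Fin b,
            |(∑ S : Fin d → Fin k, W S * ∏ i, p i (S i) (A i)) - Φ (W', p') A|
          ≤ ∑ A : Fin d → Fin b, ∑ S : Fin d → Fin k,
              (|W S - W' S| * ∏ i, p i (S i) (A i)
                + W' S * |(∏ i, p i (S i) (A i)) - ∏ i, p' i (S i) (A i)|) :=
            Finset.sum_le_sum fun A _ => pointwise A
        _ = ∑ S : Fin d → Fin k, ∑ A : Fin d → Fin b,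
              (|W S - W' S| * ∏ i, p i (S i) (A i)
                + W' S * |(∏ i, p i (S i) (A i)) - ∏ i, p' i (S i) (A i)|) :=
            Finset.sum_comm
        _ = ∑ S : Fin d → Fin k,
              (|W S - W' S| * (∑ A : Fin d → Fin b, ∏ i, p i (S i) (A i))
                + W' S * (∑ A : Fin d → Fin b,
                    |(∏ i, p i (S i) (A i)) - ∏ i, p' i (S i) (A i)|)) := by
            refine Finset.sum_congr rfl fun S _ => ?_
            rw [Finset.sum_add_distrib, ← Finset.mul_sum, ← Finset.mul_sum]
        _ ≤ ∑ S : Fin d → Fin k, (|W S - W' S| * 1 + W' S * (d * δp)) := by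
            refine Finset.sum_le_sum fun S _ => ?_
            rw [hone S]
            exact add_le_add le_rfl
              (mul_le_mul_of_nonneg_left (hfact S) (hW'props.1 S))
        _ = (∑ S : Fin d → Fin k, |W S - W' S|)
              + (∑ S : Fin d → Fin k, W' S) * (d * δp) := by
            rw [Finset.sum_add_distrib]
            simp only [mul_one]
            rw [← Finset.sum_mul]
        _ ≤ δW + d * δp := by
            rw [hW'props.2, one_mul]
            exact add_le_add hW'd le_rfl
    refine main.trans (le_of_eq ?_)
    rw [hδW, hδp]
    have hdne : (d:ℝ) ≠ 0 := by positivity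
    field_simp
    ring
end
end

section
/- Let L ≥ 0, b ∈ ℕ, and let f : [0,1] → ℝ be L-Lipschitz continuous. Then there exist real numbers w₁,…,w_b such that ∫₀¹ ( f(x) − Σ_{i=1}^b w_i·1[(i−1)/b ≤ x < i/b] )² dx ≤ L²/(12b²); i.e. the squared L² distance from f to the space of functions constant on each of the b equal-width bins of [0,1) is at most L²/(12b²). -/
open MeasureTheory

noncomputable section

/-- Lemma `1dhistproj`: an `L`-Lipschitz function on `[0,1]` is
approximated in squared `L²` distance within `L²/(12b²)` by some function that is constant
on each of the `b` equal-width bins of `[0,1)`. -/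
theorem lipschitz_histogram_approx (L : ℝ) (hL : 0 ≤ L) (b : ℕ) (hb : 0 < b)
    (f : ℝ → ℝ)
    (hf : ∀ x ∈ Set.Icc (0 : ℝ) 1, ∀ y ∈ Set.Icc (0 : ℝ) 1, |f x - f y| ≤ L * |x - y|) :
    ∃ w : Fin b → ℝ,
      (∫ x in Set.Ico (0 : ℝ) 1,
        (f x - ∑ i : Fin b,
          w i * (if (i : ℝ) / b ≤ x ∧ x < ((i : ℝ) + 1) / b then (1 : ℝ) else 0)) ^ 2)
        ≤ L ^ 2 / (12 * (b : ℝ) ^ 2) := by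
  have hb' : (0 : ℝ) < b := by exact_mod_cast hb
  set m : ℕ → ℝ := fun k => ((k : ℝ) + 1/2) / b with hm
  set w : Fin b → ℝ := fun i => f (m i) with hw
  refine ⟨w, ?_⟩
  set g : ℝ → ℝ := fun x => (f x - ∑ i : Fin b,
      w i * (if (i : ℝ) / b ≤ x ∧ x < ((i : ℝ) + 1) / b then (1 : ℝ) else 0)) ^ 2 with hg
  -- membership facts
  have hmk : ∀ k : ℕ, k < b → m k ∈ Set.Icc (0 : ℝ) 1 := by
    intro k hk
    constructor
    · positivity
    · rw [hm]
      simp only []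
      rw [div_le_one hb']
      have : (k : ℝ) + 1 ≤ b := by exact_mod_cast hk
      linarith
  have hxmem : ∀ k : ℕ, k < b → ∀ x ∈ Set.Ico ((k : ℝ)/b) (((k : ℝ)+1)/b),
      x ∈ Set.Icc (0 : ℝ) 1 := by
    intro k hk x hx
    have h1 : (0 : ℝ) ≤ (k : ℝ)/b := by positivity
    have h2 : ((k : ℝ)+1)/b ≤ 1 := by
      rw [div_le_one hb']; exact_mod_cast hk
    exact ⟨le_trans h1 hx.1, le_of_lt (lt_of_lt_of_le hx.2 h2)⟩
  -- continuity of f on [0,1]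
  have hfc : ContinuousOn f (Set.Icc (0:ℝ) 1) := by
    refine (LipschitzOnWith.of_dist_le_mul (K := L.toNNReal) ?_).continuousOn
    intro x hx y hy
    simpa [Real.dist_eq, Real.coe_toNNReal L hL] using hf x hx y hy
  -- on each bin, g equals (f x - w k)^2
  have hgeq : ∀ k : ℕ, ∀ hk : k < b, ∀ x ∈ Set.Ico ((k : ℝ)/b) (((k : ℝ)+1)/b),
      g x = (f x - w ⟨k, hk⟩) ^ 2 := by
    intro k hk x hx
    have hsum : (∑ i : Fin b,
        w i * (if (i : ℝ) / b ≤ x ∧ x < ((i : ℝ) + 1) / b then (1 : ℝ) else 0))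
        = w ⟨k, hk⟩ := by
      rw [Finset.sum_eq_single (⟨k, hk⟩ : Fin b)]
      · simp only [Fin.val_mk]
        rw [if_pos ⟨hx.1, hx.2⟩, mul_one]
      · intro i _ hik
        have hik' : (i : ℕ) ≠ k := fun h => hik (Fin.ext h)
        rw [if_neg, mul_zero]
        rintro ⟨h1, h2⟩
        apply hik'
        have e1 : (i : ℝ) < (k : ℝ) + 1 := by
          have := lt_of_le_of_lt h1 hx.2
          exact (div_lt_div_iff_of_pos_right hb').mp this
        have e2 : (k : ℝ) < (i : ℝ) + 1 := by
          have := lt_of_le_of_lt hx.1 h2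
          exact (div_lt_div_iff_of_pos_right hb').mp this
        have e1' : (i : ℕ) < k + 1 := by exact_mod_cast e1
        have e2' : k < (i : ℕ) + 1 := by exact_mod_cast e2
        omega
      · intro h; exact absurd (Finset.mem_univ _) h
    simp only [hg, hsum]
  -- pointwise quadratic bound on each bin
  have hbound : ∀ k : ℕ, ∀ hk : k < b, ∀ x ∈ Set.Ico ((k : ℝ)/b) (((k : ℝ)+1)/b),
      (f x - w ⟨k, hk⟩) ^ 2 ≤ L ^ 2 * (x - m k) ^ 2 := by
    intro k hk x hx
    have h1 : |f x - f (m k)| ≤ L * |x - m k| := hf x (hxmem k hk x hx) (m k) (hmk k hk)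
    have h2 : (f x - f (m k)) ^ 2 ≤ (L * |x - m k|) ^ 2 := by
      rw [← sq_abs (f x - f (m k))]
      exact pow_le_pow_left₀ (abs_nonneg _) h1 2
    calc (f x - w ⟨k, hk⟩) ^ 2 = (f x - f (m k)) ^ 2 := by rw [hw]
      _ ≤ (L * |x - m k|) ^ 2 := h2
      _ = L ^ 2 * (x - m k) ^ 2 := by rw [mul_pow, sq_abs]
  -- integrability of g on each bin
  have hintIco : ∀ k : ℕ, ∀ hk : k < b,
      IntegrableOn g (Set.Ico ((k : ℝ)/b) (((k : ℝ)+1)/b)) volume := by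
    intro k hk
    have hsub : Set.Icc ((k : ℝ)/b) (((k : ℝ)+1)/b) ⊆ Set.Icc (0:ℝ) 1 := by
      apply Set.Icc_subset_Icc
      · positivity
      · rw [div_le_one hb']; exact_mod_cast hk
    have hc : ContinuousOn (fun x => (f x - w ⟨k, hk⟩) ^ 2)
        (Set.Icc ((k : ℝ)/b) (((k : ℝ)+1)/b)) :=
      (((hfc.mono hsub).sub continuousOn_const).pow 2)
    have hi : IntegrableOn (fun x => (f x - w ⟨k, hk⟩) ^ 2)
        (Set.Ico ((k : ℝ)/b) (((k : ℝ)+1)/b)) volume :=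
      hc.integrableOn_Icc.mono_set Set.Ico_subset_Icc_self
    exact hi.congr_fun (fun x hx => (hgeq k hk x hx).symm) measurableSet_Ico
  have hintIoc : ∀ k : ℕ, ∀ hk : k < b,
      IntegrableOn g (Set.Ioc ((k : ℝ)/b) (((k : ℝ)+1)/b)) volume := by
    intro k hk
    exact (hintIco k hk).congr_set_ae MeasureTheory.Ico_ae_eq_Ioc.symm
  have hle : ∀ k : ℕ, (k : ℝ)/b ≤ ((k : ℝ)+1)/b := by
    intro k
    gcongr
    linarith
  -- interval integrability of g on each piece
  have hii : ∀ k < b, IntervalIntegrable g volume ((k:ℝ)/b) (((k:ℝ)+1)/b) := by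
    intro k hk
    exact (intervalIntegrable_iff_integrableOn_Ioc_of_le (hle k)).mpr (hintIoc k hk)
  -- exact integral of the quadratic majorant on each bin
  have hcomp : ∀ k : ℕ,
      (∫ x in ((k:ℝ)/b)..(((k:ℝ)+1)/b), L^2 * (x - m k)^2) = L^2 / (12 * (b:ℝ)^3) := by
    intro k
    rw [intervalIntegral.integral_const_mul]
    have hsub : (∫ x in ((k:ℝ)/b)..(((k:ℝ)+1)/b), (x - m k)^2)
        = ∫ x in ((k:ℝ)/b - m k)..(((k:ℝ)+1)/b - m k), x^2 :=
      intervalIntegral.integral_comp_sub_right (fun x => x^2) (m k)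
    have e1 : (k:ℝ)/b - m k = -(1/(2*b)) := by
      rw [hm]; field_simp; ring
    have e2 : ((k:ℝ)+1)/b - m k = 1/(2*b) := by
      rw [hm]; field_simp; ring
    rw [hsub, e1, e2, integral_pow]
    have hb2 : ((2:ℝ)*b) ≠ 0 := by positivity
    field_simp
    ring_nf
    field_simp
  -- per-bin bound for g
  have key : ∀ k : ℕ, ∀ hk : k < b,
      (∫ x in ((k:ℝ)/b)..(((k:ℝ)+1)/b), g x) ≤ L^2 / (12 * (b:ℝ)^3) := by
    intro k hk
    have hIocIco : (∫ x in Set.Ioc ((k:ℝ)/b) (((k:ℝ)+1)/b), g x)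
        = ∫ x in Set.Ico ((k:ℝ)/b) (((k:ℝ)+1)/b), g x :=
      setIntegral_congr_set MeasureTheory.Ico_ae_eq_Ioc.symm
    rw [intervalIntegral.integral_of_le (hle k), hIocIco]
    have hsub : Set.Icc ((k : ℝ)/b) (((k : ℝ)+1)/b) ⊆ Set.Icc (0:ℝ) 1 := by
      apply Set.Icc_subset_Icc
      · positivity
      · rw [div_le_one hb']; exact_mod_cast hk
    have hint1 : IntegrableOn (fun x => (f x - w ⟨k, hk⟩) ^ 2)
        (Set.Ico ((k : ℝ)/b) (((k : ℝ)+1)/b)) volume :=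
      ((((hfc.mono hsub).sub continuousOn_const).pow 2).integrableOn_Icc).mono_set
        Set.Ico_subset_Icc_self
    have hint2 : IntegrableOn (fun x => L^2 * (x - m k) ^ 2)
        (Set.Ico ((k : ℝ)/b) (((k : ℝ)+1)/b)) volume :=
      (((continuous_const.mul
          ((continuous_id.sub continuous_const).pow 2)).continuousOn).integrableOn_Icc).mono_set
        Set.Ico_subset_Icc_self
    calc (∫ x in Set.Ico ((k:ℝ)/b) (((k:ℝ)+1)/b), g x)
        = ∫ x in Set.Ico ((k:ℝ)/b) (((k:ℝ)+1)/b), (f x - w ⟨k, hk⟩) ^ 2 :=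
          setIntegral_congr_fun measurableSet_Ico (hgeq k hk)
      _ ≤ ∫ x in Set.Ico ((k:ℝ)/b) (((k:ℝ)+1)/b), L^2 * (x - m k) ^ 2 :=
          setIntegral_mono_on hint1 hint2 measurableSet_Ico (hbound k hk)
      _ = ∫ x in ((k:ℝ)/b)..(((k:ℝ)+1)/b), L^2 * (x - m k)^2 := by
          rw [intervalIntegral.integral_of_le (hle k)]
          exact (setIntegral_congr_set MeasureTheory.Ico_ae_eq_Ioc)
      _ = L^2 / (12 * (b:ℝ)^3) := hcomp k
  -- split the whole integral
  have hsplit : (∫ x in (0:ℝ)..1, g x)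
      = ∑ k ∈ Finset.range b, ∫ x in ((k:ℝ)/b)..(((k:ℝ)+1)/b), g x := by
    have h := intervalIntegral.sum_integral_adjacent_intervals
      (a := fun k : ℕ => (k:ℝ)/b) (n := b) (f := g) (μ := volume) ?_
    · have ha0 : ((0:ℕ):ℝ)/b = 0 := by simp
      have hab : ((b:ℕ):ℝ)/b = 1 := by
        field_simp
      rw [ha0, hab] at h
      rw [← h]
      apply Finset.sum_congr rfl
      intro k _
      congr 1
      push_cast
      ring
    · intro k hk
      have : (((k+1:ℕ)):ℝ)/b = ((k:ℝ)+1)/b := by push_cast; ring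
      rw [this]
      exact hii k hk
  have hIco01 : (∫ x in Set.Ico (0:ℝ) 1, g x) = ∫ x in (0:ℝ)..1, g x := by
    rw [intervalIntegral.integral_of_le zero_le_one]
    exact setIntegral_congr_set MeasureTheory.Ico_ae_eq_Ioc
  have final : (∫ x in Set.Ico (0:ℝ) 1, g x) ≤ L ^ 2 / (12 * (b : ℝ) ^ 2) := by
    rw [hIco01, hsplit]
    calc (∑ k ∈ Finset.range b, ∫ x in ((k:ℝ)/b)..(((k:ℝ)+1)/b), g x)
        ≤ ∑ k ∈ Finset.range b, L^2 / (12 * (b:ℝ)^3) :=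
          Finset.sum_le_sum (fun k hk => key k (Finset.mem_range.mp hk))
      _ = (b:ℝ) * (L^2 / (12 * (b:ℝ)^3)) := by
          rw [Finset.sum_const, Finset.card_range, nsmul_eq_mul]
      _ = L ^ 2 / (12 * (b : ℝ) ^ 2) := by
          field_simp
  simpa [hg] using final
end
end

section
/- Let L ≥ 0, d ∈ ℕ, and b ∈ ℕ with b² ≥ L²/12, and let f₁,…,f_d ∈ Lip_L. Then ∫_{[0,1]^d} ( ∏_{i=1}^d f_i(x_i) − ∏_{i=1}^d (P_b f_i)(x_i) )² dx ≤ m_L^{2d} − (m_L² − L²/(12b²))^d. -/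
open MeasureTheory

noncomputable section

/-- `Lip_L`: `L`-Lipschitz probability density functions on `[0,1]`. -/
def LipDensity (L : ℝ) (f : ℝ → ℝ) : Prop :=
  (∀ x ∈ Set.Icc (0 : ℝ) 1, 0 ≤ f x) ∧
  (∫ x in Set.Icc (0 : ℝ) 1, f x = 1) ∧
  (∀ x ∈ Set.Icc (0 : ℝ) 1, ∀ y ∈ Set.Icc (0 : ℝ) 1, |f x - f y| ≤ L * |x - y|)

/-- `m_L = sup_{f ∈ Lip_L} ‖f‖₂`, the largest `L²` norm of an `L`-Lipschitz density. -/
def mL (L : ℝ) : ℝ :=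
  ⨆ f ∈ {f | LipDensity L f}, Real.sqrt (∫ x in Set.Icc (0 : ℝ) 1, (f x) ^ 2)

/-- `P_b f`: the `L²` projection of `f` onto the 1-d histograms with `b` equal-width bins,
whose value on the `i`-th bin is `b·∫_bin f`. -/
def projHist (b : ℕ) (f : ℝ → ℝ) : ℝ → ℝ := fun x =>
  ∑ i : Fin b,
    if (i : ℝ) / b ≤ x ∧ x < ((i : ℝ) + 1) / b
      then (b : ℝ) * ∫ t in Set.Ico ((i : ℝ) / b) (((i : ℝ) + 1) / b), f t
      else 0

/-- The closed unit cube `[0,1]^d`. -/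
def cubeC (d : ℕ) : Set (Fin d → ℝ) := Set.univ.pi fun _ => Set.Icc (0 : ℝ) 1


/-- Step D algebra lemma. -/
theorem prod_sub_prod_le {ι : Type*} (s : Finset ι) (a δ : ι → ℝ) (M : ℝ)
    (h0 : ∀ i ∈ s, 0 ≤ δ i) (h1 : ∀ i ∈ s, δ i ≤ a i) (h2 : ∀ i ∈ s, a i ≤ M) :
    ∏ i ∈ s, a i - ∏ i ∈ s, (a i - δ i) ≤ M ^ s.card - ∏ i ∈ s, (M - δ i) := by
  classical
  induction s using Finset.cons_induction with
  | empty => simp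
  | cons j s hj ih =>
    simp only [Finset.prod_cons, Finset.card_cons, Finset.mem_cons] at *
    have hδj : 0 ≤ δ j := h0 j (Or.inl rfl)
    have hja : δ j ≤ a j := h1 j (Or.inl rfl)
    have hjM : a j ≤ M := h2 j (Or.inl rfl)
    have ih' := ih (fun i hi => h0 i (Or.inr hi)) (fun i hi => h1 i (Or.inr hi))
      (fun i hi => h2 i (Or.inr hi))
    have hpa : 0 ≤ ∏ i ∈ s, a i := Finset.prod_nonneg fun i hi =>
      le_trans (h0 i (Or.inr hi)) (h1 i (Or.inr hi))
    have hpc : 0 ≤ ∏ i ∈ s, (a i - δ i) := Finset.prod_nonneg fun i hi =>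
      sub_nonneg.2 (h1 i (Or.inr hi))
    have hcM : ∏ i ∈ s, (a i - δ i) ≤ ∏ i ∈ s, (M - δ i) :=
      Finset.prod_le_prod (fun i hi => sub_nonneg.2 (h1 i (Or.inr hi)))
        (fun i hi => sub_le_sub_right (h2 i (Or.inr hi)) _)
    have hdiff : ∏ i ∈ s, (a i - δ i) ≤ ∏ i ∈ s, a i :=
      Finset.prod_le_prod (fun i hi => sub_nonneg.2 (h1 i (Or.inr hi)))
        (fun i hi => by linarith [h0 i (Or.inr hi)])
    -- a j * P - (a j - δ j) * C = a j * (P - C) + δ j * C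
    have key : a j * ∏ i ∈ s, a i - (a j - δ j) * ∏ i ∈ s, (a i - δ i)
        = a j * (∏ i ∈ s, a i - ∏ i ∈ s, (a i - δ i)) + δ j * ∏ i ∈ s, (a i - δ i) := by ring
    have hMδ : ∀ i ∈ s, 0 ≤ M - δ i := fun i hi => by
      have := h1 i (Or.inr hi); have := h2 i (Or.inr hi); linarith
    have hpM : 0 ≤ ∏ i ∈ s, (M - δ i) := Finset.prod_nonneg hMδ
    have hMd : 0 ≤ M ^ s.card - ∏ i ∈ s, (M - δ i) := by
      have h := Finset.prod_le_prod hMδ (fun i hi => by linarith [h0 i (Or.inr hi)] :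
        ∀ i ∈ s, M - δ i ≤ M)
      simpa [Finset.prod_const] using sub_nonneg.2 h
    have hM0 : 0 ≤ M := le_trans (le_trans hδj hja) hjM
    have step1 : a j * (∏ i ∈ s, a i - ∏ i ∈ s, (a i - δ i))
        ≤ M * (M ^ s.card - ∏ i ∈ s, (M - δ i)) := by
      calc a j * (∏ i ∈ s, a i - ∏ i ∈ s, (a i - δ i))
          ≤ M * (∏ i ∈ s, a i - ∏ i ∈ s, (a i - δ i)) :=
            mul_le_mul_of_nonneg_right hjM (sub_nonneg.2 hdiff)
        _ ≤ M * (M ^ s.card - ∏ i ∈ s, (M - δ i)) :=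
            mul_le_mul_of_nonneg_left ih' hM0
    have step2 : δ j * ∏ i ∈ s, (a i - δ i) ≤ δ j * ∏ i ∈ s, (M - δ i) :=
      mul_le_mul_of_nonneg_left hcM hδj
    have : a j * ∏ i ∈ s, a i - (a j - δ j) * ∏ i ∈ s, (a i - δ i)
        ≤ M * (M ^ s.card - ∏ i ∈ s, (M - δ i)) + δ j * ∏ i ∈ s, (M - δ i) := by
      rw [key]; exact add_le_add step1 step2
    calc a j * ∏ i ∈ s, a i - (a j - δ j) * ∏ i ∈ s, (a i - δ i)
        ≤ M * (M ^ s.card - ∏ i ∈ s, (M - δ i)) + δ j * ∏ i ∈ s, (M - δ i) := this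
      _ = M ^ (s.card + 1) - (M - δ j) * ∏ i ∈ s, (M - δ i) := by ring

lemma LipDensity.continuousOn {L : ℝ} {f : ℝ → ℝ} (h : LipDensity L f) :
    ContinuousOn f (Set.Icc 0 1) := by
  have : LipschitzOnWith (Real.toNNReal L) f (Set.Icc 0 1) := by
    rw [lipschitzOnWith_iff_dist_le_mul]
    intro x hx y hy
    have := h.2.2 x hx y hy
    have hL0 : (0:ℝ) ≤ L ∨ L < 0 := le_or_gt 0 L
    rcases hL0 with hL0 | hL0
    · simpa [Real.dist_eq, Real.coe_toNNReal _ hL0] using this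
    · have h1 : |f x - f y| ≤ L * |x - y| := this
      have h2 : L * |x - y| ≤ 0 * |x - y| :=
        mul_le_mul_of_nonneg_right hL0.le (abs_nonneg _)
      simp only [Real.dist_eq]
      calc |f x - f y| ≤ 0 * |x-y| := by linarith
        _ ≤ Real.toNNReal L * |x - y| := by rw [zero_mul]; positivity
  exact this.continuousOn

lemma LipDensity.integrableOn {L : ℝ} {f : ℝ → ℝ} (h : LipDensity L f) :
    IntegrableOn f (Set.Icc 0 1) :=
  h.continuousOn.integrableOn_compact isCompact_Icc

lemma LipDensity.sq_integrableOn {L : ℝ} {f : ℝ → ℝ} (h : LipDensity L f) :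
    IntegrableOn (fun x => f x ^ 2) (Set.Icc 0 1) :=
  (h.continuousOn.pow 2).integrableOn_compact isCompact_Icc

lemma LipDensity.le_bound {L : ℝ} {f : ℝ → ℝ} (h : LipDensity L f) :
    ∀ x ∈ Set.Icc (0:ℝ) 1, f x ≤ 1 + L := by
  obtain ⟨y₀, hy₀, hmin⟩ := isCompact_Icc.exists_isMinOn (Set.nonempty_Icc.2 zero_le_one)
    h.continuousOn
  have hfy₀ : f y₀ ≤ 1 := by
    by_contra hcon
    push_neg at hcon
    have hmono : (∫ _ in Set.Icc (0:ℝ) 1, f y₀) ≤ ∫ x in Set.Icc (0:ℝ) 1, f x :=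
      setIntegral_mono_on (integrableOn_const (by simp [Real.volume_Icc])) h.integrableOn
        measurableSet_Icc (fun x hx => hmin hx)
    rw [h.2.1, setIntegral_const] at hmono
    simp [Real.volume_Icc] at hmono
    linarith
  intro x hx
  have hlip := h.2.2 x hx y₀ hy₀
  have hxy : |x - y₀| ≤ 1 := by
    rw [abs_le]
    obtain ⟨hx0, hx1⟩ := hx; obtain ⟨hy0, hy1⟩ := hy₀
    constructor <;> linarith
  have hL0 : 0 ≤ L := by
    by_contra hL
    push_neg at hL
    have h1 := h.2.2 0 (by norm_num) 1 (by norm_num)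
    norm_num at h1
    linarith [abs_nonneg (f 0 - f 1)]
  have : f x - f y₀ ≤ L := by
    calc f x - f y₀ ≤ |f x - f y₀| := le_abs_self _
      _ ≤ L * |x - y₀| := hlip
      _ ≤ L * 1 := mul_le_mul_of_nonneg_left hxy hL0
      _ = L := mul_one L
  linarith

lemma LipDensity.sq_integral_le {L : ℝ} {f : ℝ → ℝ} (h : LipDensity L f) :
    (∫ x in Set.Icc (0:ℝ) 1, f x ^ 2) ≤ 1 + L := by
  have hL0 : 0 ≤ L := by
    by_contra hL
    push_neg at hL
    have h1 := h.2.2 0 (by norm_num) 1 (by norm_num)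
    norm_num at h1
    linarith [abs_nonneg (f 0 - f 1)]
  have hmono : (∫ x in Set.Icc (0:ℝ) 1, f x ^ 2) ≤ ∫ x in Set.Icc (0:ℝ) 1, (1 + L) * f x := by
    refine setIntegral_mono_on h.sq_integrableOn (h.integrableOn.const_mul _)
      measurableSet_Icc (fun x hx => ?_)
    have h1 := h.1 x hx
    have h2 := h.le_bound x hx
    nlinarith
  rw [integral_const_mul, h.2.1, mul_one] at hmono
  exact hmono

lemma mL_bddAbove (L : ℝ) :
    BddAbove (Set.range fun f : ℝ → ℝ =>
      ⨆ _ : f ∈ {f | LipDensity L f}, Real.sqrt (∫ x in Set.Icc (0 : ℝ) 1, (f x) ^ 2)) := by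
  refine ⟨Real.sqrt (1 + L), ?_⟩
  rintro y ⟨f, rfl⟩
  dsimp only
  by_cases hf : LipDensity L f
  · rw [ciSup_pos (show f ∈ {f | LipDensity L f} from hf)]
    exact Real.sqrt_le_sqrt hf.sq_integral_le
  · rw [show (f ∈ {f | LipDensity L f}) = False by simp [hf]]
    simp only [Real.iSup_of_isEmpty]
    positivity

lemma le_mL {L : ℝ} {f : ℝ → ℝ} (h : LipDensity L f) :
    Real.sqrt (∫ x in Set.Icc (0 : ℝ) 1, (f x) ^ 2) ≤ mL L := by
  have := le_ciSup (mL_bddAbove L) f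
  rwa [ciSup_pos (show f ∈ {f | LipDensity L f} from h)] at this

lemma lipDensity_const {L : ℝ} (hL : 0 ≤ L) : LipDensity L (fun _ => 1) := by
  refine ⟨fun x _ => zero_le_one, ?_, fun x _ y _ => by simpa using by positivity⟩
  simp [Real.volume_Icc]

lemma one_le_mL {L : ℝ} (hL : 0 ≤ L) : 1 ≤ mL L := by
  have h := le_mL (lipDensity_const hL)
  simpa [Real.volume_Icc] using h

lemma LipDensity.sq_int_le_mL_sq {L : ℝ} {f : ℝ → ℝ} (h : LipDensity L f) :
    (∫ x in Set.Icc (0:ℝ) 1, f x ^ 2) ≤ mL L ^ 2 := by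
  have h0 : 0 ≤ ∫ x in Set.Icc (0:ℝ) 1, f x ^ 2 :=
    setIntegral_nonneg measurableSet_Icc (fun x _ => sq_nonneg _)
  have h1 := le_mL h
  have := Real.sq_sqrt h0
  nlinarith [Real.sqrt_nonneg (∫ x in Set.Icc (0:ℝ) 1, f x ^ 2)]


-- expansion of ∫ (g-c)^2 over Ico
lemma expand_sq {g : ℝ → ℝ} (hg : Continuous g) (u v c : ℝ) (huv : u ≤ v) :
    ∫ x in Set.Ico u v, (g x - c) ^ 2 =
      (∫ x in Set.Ico u v, g x ^ 2) - 2 * c * (∫ x in Set.Ico u v, g x) + (v - u) * c ^ 2 := by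
  have h1 : IntegrableOn (fun x => g x ^ 2) (Set.Ico u v) :=
    ((hg.pow 2).integrableOn_Icc).mono_set Set.Ico_subset_Icc_self
  have h2 : IntegrableOn g (Set.Ico u v) :=
    (hg.integrableOn_Icc).mono_set Set.Ico_subset_Icc_self
  have key : ∫ x in Set.Ico u v, (g x - c) ^ 2
      = ∫ x in Set.Ico u v, (g x ^ 2 - 2 * c * g x + c ^ 2) := by
    refine setIntegral_congr_fun measurableSet_Ico (fun x _ => by ring)
  have hsub : IntegrableOn (fun x => g x ^ 2 - 2 * c * g x) (Set.Ico u v) :=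
    h1.sub (h2.const_mul _)
  have hconst : IntegrableOn (fun _ : ℝ => c ^ 2) (Set.Ico u v) :=
    integrableOn_const (by simp [Real.volume_Ico])
  have hmul : IntegrableOn (fun x => 2 * c * g x) (Set.Ico u v) := h2.const_mul _
  rw [key, integral_add hsub hconst, integral_sub h1 hmul, integral_const_mul, setIntegral_const]
  simp [Real.volume_Ico, ENNReal.toReal_ofReal (by linarith : (0:ℝ) ≤ v - u), huv]

lemma int_sq_sub_nonneg {g : ℝ → ℝ} (hg : Continuous g) (u v : ℝ) (huv : u < v) :
    0 ≤ (∫ x in Set.Ico u v, g x ^ 2) - (v - u)⁻¹ * (∫ x in Set.Ico u v, g x) ^ 2 := by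
  set S := ∫ x in Set.Ico u v, g x
  have h := expand_sq hg u v (S / (v - u)) huv.le
  have hnn : 0 ≤ ∫ x in Set.Ico u v, (g x - S / (v - u)) ^ 2 :=
    setIntegral_nonneg measurableSet_Ico (fun x _ => sq_nonneg _)
  rw [h] at hnn
  have hv : v - u ≠ 0 := by linarith
  have key : ((∫ x in Set.Ico u v, g x ^ 2) - 2 * (S / (v - u)) * S) + (v - u) * (S / (v - u)) ^ 2
      = (∫ x in Set.Ico u v, g x ^ 2) - (v - u)⁻¹ * S ^ 2 := by
    field_simp
    ring
  rw [key] at hnn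
  exact hnn

lemma bin_bound {L : ℝ} {g : ℝ → ℝ} (hg : Continuous g)
    (hLip : ∀ x y, |g x - g y| ≤ L * |x - y|) (u v : ℝ) (huv : u < v) :
    (∫ x in Set.Ico u v, g x ^ 2) - (v - u)⁻¹ * (∫ x in Set.Ico u v, g x) ^ 2
      ≤ L ^ 2 * (v - u) ^ 3 / 12 := by
  set m := (u + v) / 2 with hm
  set c := g m with hc
  -- pointwise bound
  have hpt : ∀ x, (g x - c) ^ 2 ≤ L ^ 2 * (x - m) ^ 2 := by
    intro x
    have h := hLip x m
    nlinarith [abs_nonneg (g x - g m), abs_nonneg (x - m), sq_abs (g x - g m), sq_abs (x - m)]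
  have hint : (∫ x in Set.Ico u v, (g x - c) ^ 2) ≤ ∫ x in Set.Ico u v, L ^ 2 * (x - m) ^ 2 := by
    refine setIntegral_mono_on
      (((hg.sub continuous_const).pow 2).integrableOn_Icc.mono_set Set.Ico_subset_Icc_self)
      (((continuous_const.mul ((continuous_id.sub continuous_const).pow 2)).integrableOn_Icc).mono_set
        Set.Ico_subset_Icc_self)
      measurableSet_Ico (fun x _ => hpt x)
  -- compute RHS
  have hcomp : (∫ x in Set.Ico u v, L ^ 2 * (x - m) ^ 2) = L ^ 2 * (v - u) ^ 3 / 12 := by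
    rw [integral_const_mul]
    have h1 : (∫ x in Set.Ico u v, (x - m) ^ 2) = ∫ x in Set.Ioc u v, (x - m) ^ 2 := by
      rw [integral_Ico_eq_integral_Ioo, integral_Ioc_eq_integral_Ioo]
    rw [h1, ← intervalIntegral.integral_of_le huv.le,
      intervalIntegral.integral_comp_sub_right (fun x => x ^ 2) m, integral_pow]
    have : v - m = (v - u) / 2 := by rw [hm]; ring
    have h2 : u - m = -((v - u) / 2) := by rw [hm]; ring
    rw [this, h2]
    ring
  -- combine with expansion
  have hexp := expand_sq hg u v c huv.le
  set S := ∫ x in Set.Ico u v, g x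
  set Q := ∫ x in Set.Ico u v, g x ^ 2
  have hv : (0:ℝ) < v - u := by linarith
  have hQ : Q - 2 * c * S + (v - u) * c ^ 2 ≤ L ^ 2 * (v - u) ^ 3 / 12 := by
    rw [← hexp, ← hcomp]; exact hint
  have hiv : (v - u) * (v - u)⁻¹ = 1 := mul_inv_cancel₀ hv.ne'
  nlinarith [sq_nonneg (S - (v - u) * c), mul_pos hv (inv_pos.2 hv)]

def binI (b : ℕ) (i : Fin b) : Set ℝ := Set.Ico ((i : ℝ) / b) (((i : ℝ) + 1) / b)

def binAvg (b : ℕ) (f : ℝ → ℝ) (i : Fin b) : ℝ := (b : ℝ) * ∫ t in binI b i, f t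

lemma projHist_eq (b : ℕ) (f : ℝ → ℝ) :
    projHist b f = fun x => ∑ i : Fin b, (binI b i).indicator (fun _ => binAvg b f i) x := by
  funext x
  simp [projHist, binI, binAvg, Set.indicator_apply, Set.mem_Ico]

lemma binI_measurable (b : ℕ) (i : Fin b) : MeasurableSet (binI b i) := measurableSet_Ico

lemma binI_subset (b : ℕ) (hb : 0 < b) (i : Fin b) : binI b i ⊆ Set.Icc (0:ℝ) 1 := by
  intro x hx
  obtain ⟨h1, h2⟩ := hx
  have hb' : (0:ℝ) < b := Nat.cast_pos.2 hb
  have hi : ((i : ℕ) : ℝ) + 1 ≤ b := by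
    have : (i : ℕ) + 1 ≤ b := i.2
    exact_mod_cast this
  constructor
  · have : (0:ℝ) ≤ (i : ℝ) / b := by positivity
    linarith
  · have : ((i : ℝ) + 1) / b ≤ 1 := by
      rw [div_le_one hb']; exact hi
    linarith

lemma binI_disjoint (b : ℕ) : ∀ i j : Fin b, i ≠ j → Disjoint (binI b i) (binI b j) := by
  intro i j hij
  rw [Set.disjoint_left]
  rintro x ⟨hi1, hi2⟩ ⟨hj1, hj2⟩
  have hb' : (0:ℝ) < b := by
    rcases Nat.eq_zero_or_pos b with h | h
    · exact absurd i.2 (by omega)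
    · exact_mod_cast h
  have h1 : (i : ℝ) < (j : ℝ) + 1 := by
    have := lt_of_le_of_lt hi1 hj2
    rwa [div_lt_div_iff₀ hb' hb', mul_lt_mul_iff_of_pos_right hb'] at this
  have h2 : (j : ℝ) < (i : ℝ) + 1 := by
    have := lt_of_le_of_lt hj1 hi2
    rwa [div_lt_div_iff₀ hb' hb', mul_lt_mul_iff_of_pos_right hb'] at this
  have hij1 : (i : ℕ) < (j : ℕ) + 1 := by exact_mod_cast h1
  have hij2 : (j : ℕ) < (i : ℕ) + 1 := by exact_mod_cast h2
  exact hij (Fin.ext (by omega))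

lemma binI_cover (b : ℕ) (hb : 0 < b) : Set.Ico (0:ℝ) 1 = ⋃ i ∈ (Finset.univ : Finset (Fin b)), binI b i := by
  ext x
  simp only [Set.mem_iUnion, Finset.mem_univ, Set.mem_Ico, exists_prop, true_and]
  constructor
  · rintro ⟨h0, h1⟩
    have hb' : (0:ℝ) < b := Nat.cast_pos.2 hb
    set n := ⌊(b : ℝ) * x⌋₊ with hn
    have hbx : 0 ≤ (b:ℝ) * x := by positivity
    have hnb : n < b := by
      rw [hn, Nat.floor_lt hbx]
      calc (b:ℝ) * x < b * 1 := by nlinarith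
        _ = b := mul_one _
    refine ⟨⟨n, hnb⟩, ?_, ?_⟩
    · simp only
      rw [div_le_iff₀ hb', mul_comm]
      exact_mod_cast Nat.floor_le hbx
    · simp only
      rw [lt_div_iff₀ hb', mul_comm]
      exact_mod_cast Nat.lt_floor_add_one ((b:ℝ) * x)
  · rintro ⟨i, h1, h2⟩
    have h := binI_subset b hb i ⟨h1, h2⟩
    have hb' : (0:ℝ) < b := Nat.cast_pos.2 hb
    refine ⟨h.1, lt_of_lt_of_le h2 ?_⟩
    rw [div_le_one hb']
    exact_mod_cast i.2

lemma projHist_on_bin (b : ℕ) (f : ℝ → ℝ) (j : Fin b) {x : ℝ} (hx : x ∈ binI b j) :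
    projHist b f x = binAvg b f j := by
  rw [projHist_eq]
  dsimp only
  rw [Finset.sum_eq_single j]
  · exact Set.indicator_of_mem hx _
  · intro i _ hij
    apply Set.indicator_of_notMem
    intro hxi
    exact (binI_disjoint b i j hij).ne_of_mem hxi hx rfl
  · intro h; exact absurd (Finset.mem_univ j) h

lemma projHist_measurable (b : ℕ) (f : ℝ → ℝ) : Measurable (projHist b f) := by
  rw [projHist_eq]
  exact Finset.measurable_sum _ (fun i _ =>
    (measurable_const.indicator (binI_measurable b i)))

lemma projHist_bound (b : ℕ) (f : ℝ → ℝ) :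
    ∀ x, |projHist b f x| ≤ ∑ i : Fin b, |binAvg b f i| := by
  intro x
  rw [projHist_eq]
  refine le_trans (Finset.abs_sum_le_sum_abs _ _) (Finset.sum_le_sum fun i _ => ?_)
  by_cases h : x ∈ binI b i
  · rw [Set.indicator_of_mem h]
  · rw [Set.indicator_of_notMem h]; simp

lemma bounded_integrableOn {u : ℝ → ℝ} {C : ℝ} (hm : Measurable u) (hb : ∀ x, |u x| ≤ C) :
    IntegrableOn u (Set.Icc (0:ℝ) 1) := by
  refine Integrable.mono' (g := fun _ => C) (integrableOn_const (by simp [Real.volume_Icc]))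
    hm.aestronglyMeasurable (ae_of_all _ fun x => ?_)
  simpa [Real.norm_eq_abs] using hb x

lemma projHist_integrableOn (b : ℕ) (f : ℝ → ℝ) :
    IntegrableOn (projHist b f) (Set.Icc (0:ℝ) 1) :=
  bounded_integrableOn (projHist_measurable b f) (projHist_bound b f)

lemma projHist_sq_integrableOn (b : ℕ) (f : ℝ → ℝ) :
    IntegrableOn (fun x => projHist b f x ^ 2) (Set.Icc (0:ℝ) 1) := by
  refine bounded_integrableOn ((projHist_measurable b f).pow_const 2)
    (C := (∑ i : Fin b, |binAvg b f i|) ^ 2) (fun x => ?_)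
  have h := projHist_bound b f x
  have h0 : (0:ℝ) ≤ ∑ i : Fin b, |binAvg b f i| := Finset.sum_nonneg fun i _ => abs_nonneg _
  rw [abs_pow]
  exact pow_le_pow_left₀ (abs_nonneg _) h 2

lemma mul_projHist_integrableOn (b : ℕ) {D : ℝ} {g : ℝ → ℝ} (hg : Continuous g)
    (hgb : ∀ x, |g x| ≤ D) (f : ℝ → ℝ) :
    IntegrableOn (fun x => g x * projHist b f x) (Set.Icc (0:ℝ) 1) := by
  refine bounded_integrableOn (hg.measurable.mul (projHist_measurable b f))
    (C := D * ∑ i : Fin b, |binAvg b f i|) (fun x => ?_)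
  rw [abs_mul]
  exact mul_le_mul (hgb x) (projHist_bound b f x) (abs_nonneg _)
    (le_trans (abs_nonneg _) (hgb x))

lemma integral_Icc_eq_sum_bins (b : ℕ) (hb : 0 < b) {u : ℝ → ℝ}
    (hu : IntegrableOn u (Set.Icc (0:ℝ) 1)) :
    ∫ x in Set.Icc (0:ℝ) 1, u x = ∑ i : Fin b, ∫ x in binI b i, u x := by
  rw [integral_Icc_eq_integral_Ico, binI_cover b hb]
  refine integral_biUnion_finset Finset.univ (fun i _ => binI_measurable b i)
    (fun i _ j _ hij => binI_disjoint b i j hij) (fun i _ => ?_)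
  exact hu.mono_set (binI_subset b hb i)

lemma volume_binI (b : ℕ) (hb : 0 < b) (i : Fin b) :
    (volume (binI b i)).toReal = 1 / b := by
  have hb' : (0:ℝ) < b := Nat.cast_pos.2 hb
  rw [binI, Real.volume_Ico, ENNReal.toReal_ofReal (by rw [sub_nonneg]; gcongr; linarith)]
  field_simp
  ring

lemma bin_lt (b : ℕ) (hb : 0 < b) (i : Fin b) : (i : ℝ) / b < ((i : ℝ) + 1) / b := by
  have hb' : (0:ℝ) < b := Nat.cast_pos.2 hb
  gcongr
  linarith

lemma int_projHist_sq (b : ℕ) (hb : 0 < b) (g : ℝ → ℝ) :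
    ∫ x in Set.Icc (0:ℝ) 1, projHist b g x ^ 2
      = ∑ i : Fin b, (b : ℝ) * (∫ t in binI b i, g t) ^ 2 := by
  rw [integral_Icc_eq_sum_bins b hb (projHist_sq_integrableOn b g)]
  refine Finset.sum_congr rfl fun i _ => ?_
  have hb' : (0:ℝ) < b := Nat.cast_pos.2 hb
  rw [setIntegral_congr_fun (binI_measurable b i)
    (fun x hx => by dsimp only; rw [projHist_on_bin b g i hx] : Set.EqOn (fun x => projHist b g x ^ 2)
      (fun _ => binAvg b g i ^ 2) (binI b i)), setIntegral_const, smul_eq_mul, measureReal_def, volume_binI b hb]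
  rw [binAvg]
  field_simp

lemma int_mul_projHist (b : ℕ) (hb : 0 < b) {g : ℝ → ℝ} (hg : Continuous g) :
    ∫ x in Set.Icc (0:ℝ) 1, g x * projHist b g x
      = ∑ i : Fin b, (b : ℝ) * (∫ t in binI b i, g t) ^ 2 := by
  have hint : IntegrableOn (fun x => g x * projHist b g x) (Set.Icc (0:ℝ) 1) := by
    obtain ⟨D, hD⟩ : ∃ D, ∀ x ∈ Set.Icc (0:ℝ) 1, |g x| ≤ D := by
      obtain ⟨D, hD⟩ := (isCompact_Icc.image_of_continuousOn hg.continuousOn).isBounded.subset_closedBall 0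
      exact ⟨D, fun x hx => by
        have := hD (Set.mem_image_of_mem g hx)
        simpa [Metric.mem_closedBall, Real.dist_eq] using this⟩
    refine Integrable.mono' (g := fun _ => D * ∑ i : Fin b, |binAvg b g i|)
      (integrableOn_const (by simp [Real.volume_Icc]))
      (hg.measurable.mul (projHist_measurable b g)).aestronglyMeasurable ?_
    rw [ae_restrict_iff' measurableSet_Icc]
    refine ae_of_all _ fun x hx => ?_
    rw [Real.norm_eq_abs, abs_mul]
    exact mul_le_mul (hD x hx) (projHist_bound b g x) (abs_nonneg _)
      (le_trans (abs_nonneg _) (hD x hx))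
  rw [integral_Icc_eq_sum_bins b hb hint]
  refine Finset.sum_congr rfl fun i _ => ?_
  have hb' : (0:ℝ) < b := Nat.cast_pos.2 hb
  rw [setIntegral_congr_fun (binI_measurable b i)
    (fun x hx => by dsimp only; rw [projHist_on_bin b g i hx] : Set.EqOn (fun x => g x * projHist b g x)
      (fun x => g x * binAvg b g i) (binI b i)), integral_mul_const, binAvg]
  ring

lemma int_sq_eq_sum (b : ℕ) (hb : 0 < b) {g : ℝ → ℝ} (hg : Continuous g) :
    ∫ x in Set.Icc (0:ℝ) 1, g x ^ 2 = ∑ i : Fin b, ∫ t in binI b i, g t ^ 2 :=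
  integral_Icc_eq_sum_bins b hb ((hg.pow 2).integrableOn_Icc)

lemma gap_nonneg (b : ℕ) (hb : 0 < b) {g : ℝ → ℝ} (hg : Continuous g) (i : Fin b) :
    0 ≤ (∫ t in binI b i, g t ^ 2) - (b : ℝ) * (∫ t in binI b i, g t) ^ 2 := by
  have hb' : (0:ℝ) < b := Nat.cast_pos.2 hb
  have h := int_sq_sub_nonneg hg ((i : ℝ) / b) (((i : ℝ) + 1) / b) (bin_lt b hb i)
  have he : (((i : ℝ) + 1) / b - (i : ℝ) / b)⁻¹ = (b : ℝ) := by
    field_simp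
    ring
  rw [he] at h
  exact h

lemma gap_le (b : ℕ) (hb : 0 < b) {L : ℝ} {g : ℝ → ℝ} (hg : Continuous g)
    (hLip : ∀ x y, |g x - g y| ≤ L * |x - y|) (i : Fin b) :
    (∫ t in binI b i, g t ^ 2) - (b : ℝ) * (∫ t in binI b i, g t) ^ 2
      ≤ L ^ 2 / (12 * (b : ℝ) ^ 3) := by
  have hb' : (0:ℝ) < b := Nat.cast_pos.2 hb
  have h := bin_bound hg hLip ((i : ℝ) / b) (((i : ℝ) + 1) / b) (bin_lt b hb i)
  have he : (((i : ℝ) + 1) / b - (i : ℝ) / b) = 1 / b := by field_simp; ring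
  rw [he] at h
  have he2 : ((1:ℝ) / b)⁻¹ = (b:ℝ) := by field_simp
  rw [he2] at h
  calc (∫ t in binI b i, g t ^ 2) - (b : ℝ) * (∫ t in binI b i, g t) ^ 2
      ≤ L ^ 2 * (1 / b) ^ 3 / 12 := h
    _ = L ^ 2 / (12 * (b : ℝ) ^ 3) := by
        rw [div_pow, one_pow]
        rw [mul_div_assoc, div_div]
        congr 1
        ring

def clampI (x : ℝ) : ℝ := min (max x 0) 1

lemma clampI_mem (x : ℝ) : clampI x ∈ Set.Icc (0:ℝ) 1 :=
  ⟨le_min (le_max_right x 0) zero_le_one, min_le_right _ 1⟩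

lemma clampI_eq_self {x : ℝ} (hx : x ∈ Set.Icc (0:ℝ) 1) : clampI x = x := by
  rw [clampI, max_eq_left hx.1, min_eq_left hx.2]

lemma clampI_lip (x y : ℝ) : |clampI x - clampI y| ≤ |x - y| := by
  refine le_trans (abs_min_sub_min_le_max _ _ _ _) ?_
  simp only [sub_self, abs_zero]
  rw [max_le_iff]
  exact ⟨abs_max_sub_max_le_abs x y 0, abs_nonneg _⟩

lemma measurableSet_cubeC (d : ℕ) : MeasurableSet (cubeC d) :=
  MeasurableSet.univ_pi fun _ => measurableSet_Icc

lemma mem_cubeC {d : ℕ} {x : Fin d → ℝ} : x ∈ cubeC d ↔ ∀ i, x i ∈ Set.Icc (0:ℝ) 1 := by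
  rw [cubeC, Set.mem_univ_pi]

lemma cube_indicator_prod {d : ℕ} (v : Fin d → ℝ → ℝ) :
    (cubeC d).indicator (fun x => ∏ i, v i (x i))
      = fun x => ∏ i, (Set.Icc (0:ℝ) 1).indicator (v i) (x i) := by
  funext x
  by_cases hx : x ∈ cubeC d
  · rw [Set.indicator_of_mem hx]
    exact Finset.prod_congr rfl fun i _ =>
      (Set.indicator_of_mem (mem_cubeC.1 hx i) (v i)).symm
  · rw [Set.indicator_of_notMem hx]
    obtain ⟨i, hi⟩ : ∃ i, x i ∉ Set.Icc (0:ℝ) 1 := by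
      by_contra h
      push_neg at h
      exact hx (mem_cubeC.2 h)
    exact (Finset.prod_eq_zero (Finset.mem_univ i) (Set.indicator_of_notMem hi (v i))).symm

lemma cube_integral_prod {d : ℕ} (v : Fin d → ℝ → ℝ)
    (hv : ∀ i, IntegrableOn (v i) (Set.Icc (0:ℝ) 1)) :
    ∫ x in cubeC d, ∏ i, v i (x i) = ∏ i, ∫ t in Set.Icc (0:ℝ) 1, v i t := by
  rw [← integral_indicator (measurableSet_cubeC d), cube_indicator_prod v,
    MeasureTheory.integral_fintype_prod_volume_eq_prod
      (fun i => (Set.Icc (0:ℝ) 1).indicator (v i))]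
  exact Finset.prod_congr rfl fun i _ => integral_indicator measurableSet_Icc

lemma cube_integrableOn_prod {d : ℕ} (v : Fin d → ℝ → ℝ)
    (hv : ∀ i, IntegrableOn (v i) (Set.Icc (0:ℝ) 1)) :
    IntegrableOn (fun x : Fin d → ℝ => ∏ i, v i (x i)) (cubeC d) := by
  rw [← integrable_indicator_iff (measurableSet_cubeC d), cube_indicator_prod v]
  exact Integrable.fintype_prod fun i =>
    (integrable_indicator_iff measurableSet_Icc).2 (hv i)

/-- Theorem `rank-one-l2-bias`: for `L`-Lipschitz densities `f₁,…,f_d` on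
`[0,1]` and `b² ≥ L²/12`, the squared `L²` distance between `∏ f_i` and its projection
`∏ P_b f_i` is at most `m_L^{2d} − (m_L² − L²/(12b²))^d`. -/
theorem multiview_rank_one_l2_bias (L : ℝ) (hL : 0 ≤ L) (d b : ℕ)
    (hd : 0 < d) (hb0 : 0 < b) (hb : L ^ 2 / 12 ≤ (b : ℝ) ^ 2)
    (f : Fin d → ℝ → ℝ) (hf : ∀ i, LipDensity L (f i)) :
    (∫ x in cubeC d, (∏ i, f i (x i) - ∏ i, projHist b (f i) (x i)) ^ 2) ≤
      (mL L) ^ (2 * d) - ((mL L) ^ 2 - L ^ 2 / (12 * (b : ℝ) ^ 2)) ^ d := by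
  classical
  have hb' : (0:ℝ) < b := Nat.cast_pos.2 hb0
  set M := mL L ^ 2 with hM
  set ε := L ^ 2 / (12 * (b:ℝ) ^ 2) with hε
  -- clamped versions of the densities
  set g : Fin d → ℝ → ℝ := fun i x => f i (clampI x) with hgdef
  have hgeq : ∀ i, ∀ x ∈ Set.Icc (0:ℝ) 1, g i x = f i x := by
    intro i x hx
    show f i (clampI x) = f i x
    rw [clampI_eq_self hx]
  have hgLip : ∀ i, ∀ x y, |g i x - g i y| ≤ L * |x - y| := by
    intro i x y
    calc |g i x - g i y| = |f i (clampI x) - f i (clampI y)| := rfl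
      _ ≤ L * |clampI x - clampI y| := (hf i).2.2 _ (clampI_mem x) _ (clampI_mem y)
      _ ≤ L * |x - y| := mul_le_mul_of_nonneg_left (clampI_lip x y) hL
  have hgcont : ∀ i, Continuous (g i) := by
    intro i
    have : LipschitzWith (Real.toNNReal L) (g i) := by
      refine LipschitzWith.of_dist_le_mul fun x y => ?_
      rw [Real.dist_eq, Real.dist_eq, Real.coe_toNNReal _ hL]
      exact hgLip i x y
    exact this.continuous
  have hgbdd : ∀ i, ∀ x, |g i x| ≤ |f i 0| + L := by
    intro i x
    have h0 : (0:ℝ) ∈ Set.Icc (0:ℝ) 1 := by norm_num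
    have h1 : |f i (clampI x) - f i 0| ≤ L * |clampI x - 0| :=
      (hf i).2.2 _ (clampI_mem x) 0 h0
    have h2 : |clampI x - 0| ≤ 1 := by
      have := clampI_mem x
      rw [sub_zero, abs_le]
      constructor <;> [linarith [this.1]; exact this.2]
    have h3 : |g i x - f i 0| ≤ L := by
      calc |g i x - f i 0| = |f i (clampI x) - f i 0| := rfl
        _ ≤ L * |clampI x - 0| := h1
        _ ≤ L * 1 := mul_le_mul_of_nonneg_left h2 hL
        _ = L := mul_one L
    calc |g i x| = |(g i x - f i 0) + f i 0| := by ring_nf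
      _ ≤ |g i x - f i 0| + |f i 0| := abs_add_le _ _
      _ ≤ L + |f i 0| := add_le_add h3 le_rfl
      _ = |f i 0| + L := add_comm _ _
  have hproj_eq : ∀ i, projHist b (f i) = projHist b (g i) := by
    intro i
    funext x
    rw [projHist, projHist]
    refine Finset.sum_congr rfl fun j _ => ?_
    refine if_congr Iff.rfl ?_ rfl
    congr 1
    exact setIntegral_congr_fun measurableSet_Ico
      (fun t ht => (hgeq i t (binI_subset b hb0 j ht)).symm)
  set a : Fin d → ℝ := fun i => ∫ x in Set.Icc (0:ℝ) 1, g i x ^ 2 with ha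
  set c : Fin d → ℝ := fun i => ∑ j : Fin b, (b:ℝ) * (∫ t in binI b j, g i t) ^ 2 with hc
  have hint1 : ∀ i, IntegrableOn (fun x => g i x ^ 2) (Set.Icc (0:ℝ) 1) :=
    fun i => ((hgcont i).pow 2).integrableOn_Icc
  have hint2 : ∀ i, IntegrableOn (fun x => g i x * projHist b (g i) x) (Set.Icc (0:ℝ) 1) :=
    fun i => mul_projHist_integrableOn b (hgcont i) (hgbdd i) (g i)
  have hint3 : ∀ i, IntegrableOn (fun x => projHist b (g i) x ^ 2) (Set.Icc (0:ℝ) 1) :=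
    fun i => projHist_sq_integrableOn b (g i)
  have hsum : ∀ i, a i - c i = ∑ j : Fin b,
      ((∫ t in binI b j, g i t ^ 2) - (b:ℝ) * (∫ t in binI b j, g i t) ^ 2) := by
    intro i
    rw [ha, hc]
    dsimp only
    rw [int_sq_eq_sum b hb0 (hgcont i), ← Finset.sum_sub_distrib]
  have hca : ∀ i, c i ≤ a i := by
    intro i
    have h : 0 ≤ a i - c i := by
      rw [hsum i]
      exact Finset.sum_nonneg fun j _ => gap_nonneg b hb0 (hgcont i) j
    linarith
  have hacε : ∀ i, a i - c i ≤ ε := by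
    intro i
    rw [hsum i]
    calc ∑ j : Fin b, ((∫ t in binI b j, g i t ^ 2) - (b:ℝ) * (∫ t in binI b j, g i t) ^ 2)
        ≤ ∑ _j : Fin b, L ^ 2 / (12 * (b:ℝ) ^ 3) :=
          Finset.sum_le_sum fun j _ => gap_le b hb0 (hgcont i) (hgLip i) j
      _ = (b:ℝ) * (L ^ 2 / (12 * (b:ℝ) ^ 3)) := by
          rw [Finset.sum_const, Finset.card_univ, Fintype.card_fin, nsmul_eq_mul]
      _ = ε := by rw [hε]; field_simp
  have hc0 : ∀ i, 0 ≤ c i := fun i => Finset.sum_nonneg fun j _ => by positivity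
  have haM : ∀ i, a i ≤ M := by
    intro i
    have he : a i = ∫ x in Set.Icc (0:ℝ) 1, f i x ^ 2 := by
      rw [ha]
      exact setIntegral_congr_fun measurableSet_Icc fun x hx => by rw [hgeq i x hx]
    rw [he, hM]
    exact (hf i).sq_int_le_mL_sq
  -- rewrite the LHS integral
  have E1 : ∫ x in cubeC d, ∏ i, g i (x i) ^ 2 = ∏ i, a i := by
    have h := cube_integral_prod (fun i t => g i t ^ 2) hint1
    simpa using h
  have E2 : ∫ x in cubeC d, ∏ i, (g i (x i) * projHist b (g i) (x i)) = ∏ i, c i := by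
    have h := cube_integral_prod (fun i t => g i t * projHist b (g i) t) hint2
    rw [h]
    refine Finset.prod_congr rfl fun i _ => ?_
    rw [hc]
    exact int_mul_projHist b hb0 (hgcont i)
  have E3 : ∫ x in cubeC d, ∏ i, projHist b (g i) (x i) ^ 2 = ∏ i, c i := by
    have h := cube_integral_prod (fun i t => projHist b (g i) t ^ 2) hint3
    rw [h]
    refine Finset.prod_congr rfl fun i _ => ?_
    rw [hc]
    exact int_projHist_sq b hb0 (g i)
  have iA : IntegrableOn (fun x : Fin d → ℝ => ∏ i, g i (x i) ^ 2) (cubeC d) := by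
    simpa using cube_integrableOn_prod (fun i t => g i t ^ 2) hint1
  have iB : IntegrableOn (fun x : Fin d → ℝ => ∏ i, (g i (x i) * projHist b (g i) (x i)))
      (cubeC d) := by
    simpa using cube_integrableOn_prod (fun i t => g i t * projHist b (g i) t) hint2
  have iC : IntegrableOn (fun x : Fin d → ℝ => ∏ i, projHist b (g i) (x i) ^ 2) (cubeC d) := by
    simpa using cube_integrableOn_prod (fun i t => projHist b (g i) t ^ 2) hint3
  have iB2 : IntegrableOn (fun x : Fin d → ℝ =>
      2 * ∏ i, (g i (x i) * projHist b (g i) (x i))) (cubeC d) := iB.const_mul 2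
  have iAB : IntegrableOn (fun x : Fin d → ℝ =>
      (∏ i, g i (x i) ^ 2) - 2 * ∏ i, (g i (x i) * projHist b (g i) (x i))) (cubeC d) :=
    iA.sub iB2
  have step1 : (∫ x in cubeC d, (∏ i, f i (x i) - ∏ i, projHist b (f i) (x i)) ^ 2)
      = ∫ x in cubeC d, ((∏ i, g i (x i) ^ 2)
          - 2 * ∏ i, (g i (x i) * projHist b (g i) (x i))
          + ∏ i, projHist b (g i) (x i) ^ 2) := by
    refine setIntegral_congr_fun (measurableSet_cubeC d) fun x hx => ?_
    have h1 : ∏ i, f i (x i) = ∏ i, g i (x i) :=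
      Finset.prod_congr rfl fun i _ => (hgeq i (x i) (mem_cubeC.1 hx i)).symm
    have h2 : ∏ i, projHist b (f i) (x i) = ∏ i, projHist b (g i) (x i) :=
      Finset.prod_congr rfl fun i _ => by rw [hproj_eq i]
    have h3 : (∏ i, g i (x i)) ^ 2 = ∏ i, g i (x i) ^ 2 := (Finset.prod_pow _ _ _).symm
    have h4 : (∏ i, projHist b (g i) (x i)) ^ 2 = ∏ i, projHist b (g i) (x i) ^ 2 :=
      (Finset.prod_pow _ _ _).symm
    have h5 : (∏ i, g i (x i)) * (∏ i, projHist b (g i) (x i))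
        = ∏ i, (g i (x i) * projHist b (g i) (x i)) := Finset.prod_mul_distrib.symm
    have hq : ∀ A B : ℝ, (A - B) ^ 2 = A ^ 2 - 2 * (A * B) + B ^ 2 := fun A B => by ring
    rw [h1, h2, hq, h3, h4, h5]
  have hLHS : (∫ x in cubeC d, (∏ i, f i (x i) - ∏ i, projHist b (f i) (x i)) ^ 2)
      = ∏ i, a i - ∏ i, c i := by
    rw [step1, integral_add iAB iC, integral_sub iA iB2, integral_const_mul, E1, E2, E3]
    ring
  rw [hLHS]
  -- final elementary bound
  have hM1 : (1:ℝ) ≤ M := by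
    rw [hM]
    nlinarith [one_le_mL hL]
  have hε1 : ε ≤ 1 := by
    rw [hε, div_le_one (by positivity)]
    nlinarith [hb]
  have hε0 : 0 ≤ ε := by rw [hε]; positivity
  have halg := prod_sub_prod_le Finset.univ a (fun i => a i - c i) M
    (fun i _ => by show (0:ℝ) ≤ a i - c i; linarith [hca i])
    (fun i _ => by show a i - c i ≤ a i; linarith [hc0 i]) (fun i _ => haM i)
  simp only [sub_sub_cancel, Finset.card_univ, Fintype.card_fin] at halg
  have hprod : (M - ε) ^ d ≤ ∏ i : Fin d, (M - (a i - c i)) := by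
    calc (M - ε) ^ d = ∏ _i : Fin d, (M - ε) := by
          rw [Finset.prod_const, Finset.card_univ, Fintype.card_fin]
      _ ≤ ∏ i : Fin d, (M - (a i - c i)) :=
          Finset.prod_le_prod (fun i _ => by linarith) (fun i _ => by linarith [hacε i])
  have hfinal : ∏ i, a i - ∏ i, c i ≤ M ^ d - (M - ε) ^ d := by linarith
  calc ∏ i, a i - ∏ i, c i ≤ M ^ d - (M - ε) ^ d := hfinal
    _ = mL L ^ (2 * d) - (mL L ^ 2 - ε) ^ d := by rw [hM, ← pow_mul]
end
end

section
/- Let n ≥ 2 and let y = (y₁,…,y_n) be a finite sequence of real numbers, and let ỹ = (ỹ₁,…,ỹ_n) be its monotone nondecreasing rearrangement (a permutation of the entries of y with ỹ₁ ≤ ỹ₂ ≤ ⋯ ≤ ỹ_n). Then max_{1 ≤ i ≤ n−1} |y_{i+1} − y_i| ≥ max_{1 ≤ i ≤ n−1} (ỹ_{i+1} − ỹ_i). -/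
noncomputable section

/-- Lemma `monotonize`: for a real sequence `y` of length `n ≥ 2` with
monotone nondecreasing rearrangement `ỹ = y ∘ σ`, the maximal gap of `ỹ` is at most the
maximal successive difference of `y`:
`max_i |y_{i+1} − y_i| ≥ max_i (ỹ_{i+1} − ỹ_i)`. -/
theorem monotone_rearrangement_gap (n : ℕ) (y ty : Fin (n + 2) → ℝ)
    (σ : Equiv.Perm (Fin (n + 2))) (hty : ty = y ∘ σ) (hmono : Monotone ty) :
    Finset.univ.sup' Finset.univ_nonempty
        (fun i : Fin (n + 1) => ty i.succ - ty i.castSucc) ≤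
      Finset.univ.sup' Finset.univ_nonempty
        (fun i : Fin (n + 1) => |y i.succ - y i.castSucc|) := by
  apply Finset.sup'_le
  intro i _
  have hyk : ∀ k, ty k = y (σ k) := fun k => by rw [hty]; rfl
  rcases le_or_gt (ty i.succ - ty i.castSucc) 0 with hle | hg
  · exact le_trans hle (le_trans (abs_nonneg _)
      (Finset.le_sup' (fun j : Fin (n + 1) => |y j.succ - y j.castSucc|) (Finset.mem_univ 0)))
  · set t := ty i.castSucc with ht
    have hgt : t < ty i.succ := by linarith
    -- key fact: any value exceeding t is at least ty i.succ
    have hbig : ∀ k, ¬ (y k ≤ t) → ty i.succ ≤ y k := by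
      intro k hk
      have h1 : y k = ty (σ⁻¹ k) := by rw [hyk]; simp
      rw [h1] at hk ⊢
      have h2 : i.castSucc < σ⁻¹ k := by
        by_contra h
        exact hk (hmono (not_lt.mp h))
      exact hmono (Fin.castSucc_lt_iff_succ_le.mp h2)
    -- find a crossing
    have hA : y (σ i.castSucc) ≤ t := by rw [← hyk]
    have hB : ¬ (y (σ i.succ) ≤ t) := by rw [← hyk]; exact not_le.mpr hgt
    have hcross : ∃ j : Fin (n + 1),
        (y j.castSucc ≤ t ∧ ¬ y j.succ ≤ t) ∨ (¬ y j.castSucc ≤ t ∧ y j.succ ≤ t) := by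
      by_contra hc
      push_neg at hc
      have hiff : ∀ j : Fin (n + 1), (y j.castSucc ≤ t ↔ y j.succ ≤ t) := by
        intro j
        obtain ⟨h1, h2⟩ := hc j
        refine ⟨h1, fun hs => ?_⟩
        by_contra hcs
        exact absurd (h2 (not_le.mp hcs)) (not_lt.mpr hs)
      have hconst : ∀ k : Fin (n + 2), (y 0 ≤ t ↔ y k ≤ t) := by
        intro k
        induction k using Fin.induction with
        | zero => exact Iff.rfl
        | succ j ih => exact ih.trans (hiff j)
      have h1 := (hconst (σ i.castSucc)).mpr hA
      have h2 := (hconst (σ i.succ)).mp h1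
      exact hB h2
    obtain ⟨j, hj⟩ := hcross
    have hbound : ty i.succ - ty i.castSucc ≤ |y j.succ - y j.castSucc| := by
      rcases hj with ⟨h1, h2⟩ | ⟨h1, h2⟩
      · have := hbig _ h2
        rw [abs_of_nonneg (by linarith)]
        linarith
      · have := hbig _ h1
        rw [abs_sub_comm, abs_of_nonneg (by linarith)]
        linarith
    exact le_trans hbound
      (Finset.le_sup' (fun j : Fin (n + 1) => |y j.succ - y j.castSucc|) (Finset.mem_univ j))
end
end
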